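/- arXiv:2601.18774 — 4 statements merged into one kernel-verified Lean document; each statement's English description precedes it below -/
import Mathlib

section
/- Let (p_t) and (q_t) = (1 − p_t) be the win-probability martingales of two players with continuous paths, p_0 = P(Y=1) ∈ [1/2, 1), p_1 = Y ∈ {0,1}. Define the eventual loser's maximum M_λ = sup_t p_t on {Y=0} and M_λ = sup_t q_t on {Y=1}. Then P(M_λ ≤ x) = 0 for x < 1−p_0; P(M_λ ≤ x) = 1 − (1−p_0)/x for 1−p_0 ≤ x < p_0; and P(M_λ ≤ x) = 2 − 1/x for p_0 ≤ x < 1. -/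
open MeasureTheory ProbabilityTheory unitInterval

noncomputable def dy (n k : ℕ) : unitInterval := Set.projIcc 0 1 zero_le_one ((k : ℝ) / 2 ^ n)

lemma dy_mono (n : ℕ) : Monotone (dy n) := fun i j hij =>
  Set.monotone_projIcc _ (by gcongr)

lemma dy_coe {n k : ℕ} (hk : k ≤ 2 ^ n) : (dy n k : ℝ) = (k : ℝ) / 2 ^ n := by
  rw [dy, Set.projIcc_of_mem]
  constructor
  · positivity
  · rw [div_le_one (by positivity)]
    exact_mod_cast hk

lemma dy_zero (n : ℕ) : dy n 0 = 0 := by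
  ext
  rw [dy_coe (Nat.zero_le _)]
  simp

lemma dy_one {n k : ℕ} (hk : 2 ^ n ≤ k) : dy n k = 1 := by
  ext
  rw [dy, Set.projIcc_of_right_le]
  · simp
  · rw [le_div_iff₀ (by positivity)]
    simpa using by exact_mod_cast hk

lemma dy_succ (n k : ℕ) : dy n k = dy (n + 1) (2 * k) := by
  ext
  rw [dy, dy]
  congr 1
  push_cast
  ring

lemma dy_mesh (n k : ℕ) : |(dy n (k + 1) : ℝ) - (dy n k : ℝ)| ≤ 1 / 2 ^ n := by
  rcases le_or_gt (2 ^ n) k with h | h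
  · rw [dy_one h, dy_one (h.trans (Nat.le_succ k))]
    simp only [Set.Icc.coe_one, sub_self, abs_zero]
    positivity
  · have e1 : (dy n (k+1) : ℝ) = ((k:ℝ)+1)/2^n := by
      rw [dy_coe h.nat_succ_le]; push_cast; ring
    have e2 : (dy n k : ℝ) = (k:ℝ)/2^n := dy_coe h.le
    rw [e1, e2, div_sub_div_same, add_sub_cancel_left, abs_of_nonneg (by positivity)]

lemma dy_dense : Dense {t : unitInterval | ∃ n k, k ≤ 2 ^ n ∧ dy n k = t} := by
  intro t
  rw [Metric.mem_closure_iff]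
  intro ε hε
  obtain ⟨n, hn⟩ := exists_pow_lt_of_lt_one hε (by norm_num : (1:ℝ)/2 < 1)
  set k := ⌊(t : ℝ) * 2 ^ n⌋₊ with hk
  have ht0 : (0:ℝ) ≤ t := t.2.1
  have ht1 : (t:ℝ) ≤ 1 := t.2.2
  have hkle : k ≤ 2 ^ n := by
    rw [hk]
    apply Nat.floor_le_of_le
    calc (t:ℝ) * 2 ^ n ≤ 1 * 2 ^ n := by gcongr
    _ = ((2:ℝ)) ^ n := by ring
    _ = ((2 ^ n : ℕ) : ℝ) := by push_cast; ring
  refine ⟨dy n k, ⟨n, k, hkle, rfl⟩, ?_⟩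
  rw [Subtype.dist_eq, Real.dist_eq, dy_coe hkle]
  have h1 : (k : ℝ) ≤ (t : ℝ) * 2 ^ n := Nat.floor_le (by positivity)
  have h2 : (t : ℝ) * 2 ^ n < k + 1 := Nat.lt_floor_add_one _
  have h2n : (0:ℝ) < 2 ^ n := by positivity
  have hk2 : (k:ℝ)/2^n ≤ t := by rw [div_le_iff₀ h2n]; linarith
  have hk3 : (t:ℝ) ≤ ((k:ℝ)+1)/2^n := by rw [le_div_iff₀ h2n]; linarith
  have hsplit : ((k:ℝ)+1)/2^n = (k:ℝ)/2^n + 1/2^n := by ring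
  have hhalf : ((1:ℝ)/2)^n = 1/2^n := by rw [div_pow, one_pow]
  have hpos : (0:ℝ) < 1/2^n := by positivity
  rw [abs_lt]
  constructor <;> linarith

lemma stepA {Ω : Type*} {m0 : MeasurableSpace Ω} {μ : Measure Ω} [IsProbabilityMeasure μ]
    {ℱ : Filtration unitInterval m0} {p : unitInterval → Ω → ℝ} {c : ℝ}
    (hmart : Martingale p ℱ μ) (hcont : ∀ ω, Continuous fun t => p t ω)
    (hbdd : ∀ t ω, p t ω ∈ Set.Icc (0:ℝ) 1) (hp0 : ∀ ω, p 0 ω = c)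
    (hterm : ∀ᵐ ω ∂μ, p 1 ω = 0 ∨ p 1 ω = 1)
    {x : ℝ} (hx1 : c < x) (hx2 : x < 1) :
    x * (μ (⋃ n, {ω | ∃ k ≤ 2 ^ n, x ≤ p (dy n k) ω})).toReal = c := by
  have hmeasp : ∀ t, Measurable (p t) := fun t =>
    ((hmart.stronglyAdapted t).measurable).mono (ℱ.le t) le_rfl
  set H : ℕ → Set Ω := fun n => {ω | ∃ k ≤ 2 ^ n, x ≤ p (dy n k) ω} with hH
  have hHmeas : ∀ n, MeasurableSet (H n) := by
    intro n
    have : H n = ⋃ k ∈ Finset.range (2 ^ n + 1), {ω | x ≤ p (dy n k) ω} := by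
      ext ω; simp [hH, Nat.lt_succ_iff]
    rw [this]
    exact Finset.measurableSet_biUnion _ fun k _ =>
      measurableSet_le measurable_const (hmeasp _)
  have hne : ∀ n : ℕ, (Finset.range (2 ^ n)).Nonempty :=
    fun n => Finset.nonempty_range_iff.2 (pow_ne_zero n two_ne_zero)
  set D : ℕ → Ω → ℝ := fun n ω =>
    (Finset.range (2 ^ n)).sup' (hne n) fun k => |p (dy n (k + 1)) ω - p (dy n k) ω| with hD
  have hDnonneg : ∀ n ω, 0 ≤ D n ω := by
    intro n ω
    rw [hD]
    exact (abs_nonneg _).trans (Finset.le_sup'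
      (fun k => |p (dy n (k + 1)) ω - p (dy n k) ω|)
      (Finset.mem_range.2 (pow_pos two_pos n)))
  have hDle : ∀ n ω, D n ω ≤ 1 := by
    intro n ω
    refine Finset.sup'_le _ _ fun k _ => ?_
    have h1 := hbdd (dy n (k + 1)) ω
    have h2 := hbdd (dy n k) ω
    rw [abs_sub_le_iff]
    constructor <;> [linarith [h1.2, h2.1]; linarith [h1.1, h2.2]]
  have hDmeas : ∀ n, Measurable (D n) := by
    intro n
    have : D n = (Finset.range (2 ^ n)).sup' (hne n)
        fun k => fun ω => |p (dy n (k + 1)) ω - p (dy n k) ω| := by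
      funext ω
      rw [Finset.sup'_apply]
    rw [this]
    exact Finset.measurable_sup' _ fun k _ => ((hmeasp _).sub (hmeasp _)).abs
  have hDint : ∀ n, Integrable (D n) μ := by
    intro n
    refine Integrable.mono' (integrable_const (1:ℝ)) (hDmeas n).aestronglyMeasurable ?_
    exact Filter.Eventually.of_forall fun ω => by
      rw [Real.norm_eq_abs, abs_of_nonneg (hDnonneg n ω)]; exact hDle n ω
  have key : ∀ n, x * (μ (H n)).toReal ≤ c ∧
      c ≤ x * (μ (H n)).toReal + ∫ ω, D n ω ∂μ := by
    intro n
    set N := 2 ^ n with hN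
    set f : ℕ → Ω → ℝ := fun k => p (dy n k) with hf_def
    set 𝒢 : Filtration ℕ m0 :=
      ⟨fun k => ℱ (dy n k), fun i j hij => ℱ.mono (dy_mono n hij), fun k => ℱ.le _⟩ with h𝒢
    have hf : Martingale f 𝒢 μ :=
      ⟨fun k => hmart.stronglyAdapted (dy n k), fun i j hij => hmart.2 _ _ (dy_mono n hij)⟩
    set τ : Ω → ℕ := hittingBtwn f (Set.Ici x) 0 N with hτdef
    set τs : Ω → ℕ∞ := fun ω => (τ ω : ℕ∞) with hτsdef
    have hsvτs : ∀ ω, stoppedValue f τs ω = f (τ ω) ω := fun ω => rfl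
    have hτ : IsStoppingTime 𝒢 τs :=
      Adapted.isStoppingTime_hittingBtwn hf.stronglyAdapted.adapted measurableSet_Ici
    have hτle : ∀ ω, τs ω ≤ N := fun ω => WithTop.coe_le_coe.2 (hittingBtwn_le ω)
    have hint0 : ∫ ω, f 0 ω ∂μ = c := by
      have h0 : f 0 = fun _ => c := funext fun ω => by
        rw [hf_def]; simp only [dy_zero]; exact hp0 ω
      rw [h0, integral_const]; simp
    have hsv_int : Integrable (stoppedValue f τs) μ :=
      hf.submartingale.integrable_stoppedValue hτ hτle
    have E1 : ∫ ω, stoppedValue f τs ω ∂μ = c := by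
      have h1 := hf.submartingale.expected_stoppedValue_mono
        (isStoppingTime_const 𝒢 0) hτ (fun ω => WithTop.coe_le_coe.2 (Nat.zero_le _)) hτle
      have h2 := hf.neg.submartingale.expected_stoppedValue_mono
        (isStoppingTime_const 𝒢 0) hτ (fun ω => WithTop.coe_le_coe.2 (Nat.zero_le _)) hτle
      rw [stoppedValue_const] at h1 h2
      have hsvneg : stoppedValue (-f) τs = fun ω => - stoppedValue f τs ω := rfl
      have hneg0 : (-f) 0 = fun ω => - f 0 ω := rfl
      rw [hsvneg, hneg0, integral_neg, integral_neg] at h2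
      have h2' : ∫ ω, stoppedValue f τs ω ∂μ ≤ ∫ ω, f 0 ω ∂μ := by linarith
      linarith [hint0 ▸ h1, hint0 ▸ h2']
    have hHiff : ∀ ω, ω ∈ H n ↔ ∃ j ∈ Set.Icc 0 N, f j ω ∈ Set.Ici x := by
      intro ω
      simp [hH, hf_def, Set.mem_Icc, Set.mem_Ici, hN]
    have hsv_mem : ∀ ω ∈ H n, x ≤ stoppedValue f τs ω := fun ω hω =>
      stoppedValue_hittingBtwn_mem ((hHiff ω).1 hω)
    have hτN : ∀ ω, ω ∉ H n → τ ω = N := by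
      intro ω hω
      rw [hτdef, hittingBtwn]
      exact if_neg (fun h => hω ((hHiff ω).2 h))
    have hsv_zero : ∀ᵐ ω ∂μ, ω ∉ H n → stoppedValue f τs ω = 0 := by
      filter_upwards [hterm] with ω h01 hω
      have hNx : f N ω < x := by
        by_contra h
        exact hω ((hHiff ω).2 ⟨N, ⟨Nat.zero_le _, le_rfl⟩, not_lt.1 h⟩)
      have hfN : f N ω = p 1 ω := by rw [hf_def]; simp [dy_one (le_of_eq hN.symm)]
      have hsvN : stoppedValue f τs ω = f N ω := by
        rw [hsvτs, hτN ω hω]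
      rcases h01 with h0 | h1
      · rw [hsvN, hfN, h0]
      · exfalso; rw [hfN, h1] at hNx; linarith
    have hsv_upper : ∀ ω ∈ H n, stoppedValue f τs ω ≤ x + D n ω := by
      intro ω hω
      have hτpos : 1 ≤ τ ω := by
        by_contra h
        push_neg at h
        have hτ0 : τ ω = 0 := by omega
        have h1 : x ≤ stoppedValue f τs ω := hsv_mem ω hω
        have h2 : stoppedValue f τs ω = c := by
          rw [hsvτs, hτ0, hf_def]
          simp only [dy_zero]
          exact hp0 ω
        rw [h2] at h1
        linarith
      set j := τ ω - 1 with hj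
      have hjlt : j < τ ω := by omega
      have hnotmem : f j ω ∉ Set.Ici x :=
        notMem_of_lt_hittingBtwn (hτdef ▸ hjlt) (Nat.zero_le j)
      have hfj : f j ω < x := not_le.1 (by simpa using hnotmem)
      have hjmem : j ∈ Finset.range N := Finset.mem_range.2 (lt_of_lt_of_le hjlt (WithTop.coe_le_coe.1 (hτle ω)))
      have hjsucc : j + 1 = τ ω := by omega
      have hstep : stoppedValue f τs ω = f (j + 1) ω := by
        rw [hsvτs, hjsucc]
      have habs : f (j + 1) ω ≤ f j ω + |f (j + 1) ω - f j ω| := by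
        have := le_abs_self (f (j + 1) ω - f j ω); linarith
      have hsup : |f (j + 1) ω - f j ω| ≤ D n ω :=
        Finset.le_sup' (fun k => |f (k + 1) ω - f k ω|) hjmem
      calc stoppedValue f τs ω = f (j + 1) ω := hstep
        _ ≤ f j ω + |f (j + 1) ω - f j ω| := habs
        _ ≤ x + D n ω := add_le_add hfj.le hsup
    have hcompl0 : ∫ ω in (H n)ᶜ, stoppedValue f τs ω ∂μ = 0 := by
      rw [setIntegral_congr_ae (hHmeas n).compl
        (hsv_zero.mono fun ω h hω => h hω)]
      simp
    have hdecomp : ∫ ω in H n, stoppedValue f τs ω ∂μ = c := by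
      have := integral_add_compl (hHmeas n) hsv_int
      rw [hcompl0, add_zero] at this
      rw [this, E1]
    have hlow : x * (μ (H n)).toReal ≤ ∫ ω in H n, stoppedValue f τs ω ∂μ := by
      have hconst : ∫ _ω in H n, x ∂μ = (μ (H n)).toReal * x := by
        rw [setIntegral_const]; rw [smul_eq_mul, Measure.real]
      have := setIntegral_mono_on (integrableOn_const (C := x) (measure_ne_top μ _))
        hsv_int.integrableOn (hHmeas n) hsv_mem
      rw [hconst] at this
      linarith
    have hup : ∫ ω in H n, stoppedValue f τs ω ∂μ ≤
        x * (μ (H n)).toReal + ∫ ω, D n ω ∂μ := by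
      have h1 : ∫ ω in H n, stoppedValue f τs ω ∂μ ≤ ∫ ω in H n, (x + D n ω) ∂μ :=
        setIntegral_mono_on hsv_int.integrableOn
          ((integrable_const x).add (hDint n)).integrableOn (hHmeas n) hsv_upper
      have h2 : ∫ ω in H n, (x + D n ω) ∂μ
          = (μ (H n)).toReal * x + ∫ ω in H n, D n ω ∂μ := by
        rw [integral_add (integrableOn_const (C := x) (measure_ne_top μ _))
          (hDint n).integrableOn, setIntegral_const, smul_eq_mul, Measure.real]
      have h3 : ∫ ω in H n, D n ω ∂μ ≤ ∫ ω, D n ω ∂μ :=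
        setIntegral_le_integral (hDint n)
          (Filter.Eventually.of_forall fun ω => hDnonneg n ω)
      linarith
    exact ⟨by linarith [hdecomp ▸ hlow], by linarith [hdecomp ▸ hup]⟩
  -- limits
  have hHmono : Monotone H := by
    apply monotone_nat_of_le_succ
    intro n ω hω
    obtain ⟨k, hk, hxk⟩ := hω
    refine ⟨2 * k, by rw [pow_succ]; omega, ?_⟩
    rwa [← dy_succ]
  have hμtend : Filter.Tendsto (fun n => (μ (H n)).toReal) Filter.atTop
      (nhds (μ (⋃ n, H n)).toReal) :=
    (ENNReal.tendsto_toReal (measure_ne_top μ _)).comp (tendsto_measure_iUnion_atTop hHmono)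
  have hDtend : Filter.Tendsto (fun n => ∫ ω, D n ω ∂μ) Filter.atTop (nhds 0) := by
    have h0 : (0:ℝ) = ∫ _ω, (0:ℝ) ∂μ := by simp
    rw [h0]
    apply tendsto_integral_of_dominated_convergence (fun _ => (1:ℝ))
      (fun n => (hDmeas n).aestronglyMeasurable) (integrable_const 1)
    · intro n
      exact Filter.Eventually.of_forall fun ω => by
        rw [Real.norm_eq_abs, abs_of_nonneg (hDnonneg n ω)]; exact hDle n ω
    · refine Filter.Eventually.of_forall fun ω => ?_
      rw [Metric.tendsto_atTop]
      intro ε hε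
      have hu : UniformContinuous fun t => p t ω :=
        CompactSpace.uniformContinuous_of_continuous (hcont ω)
      rw [Metric.uniformContinuous_iff] at hu
      obtain ⟨δ, hδ, hδ'⟩ := hu ε hε
      obtain ⟨n₀, hn₀⟩ := exists_pow_lt_of_lt_one hδ (by norm_num : (1:ℝ)/2 < 1)
      refine ⟨n₀, fun n hn => ?_⟩
      have hmesh : (1:ℝ)/2^n ≤ (1/2)^n₀ := by
        rw [div_pow, one_pow]
        apply div_le_div_of_nonneg_left one_pos.le (by positivity)
        exact pow_le_pow_right₀ one_le_two hn
      have hterm_lt : ∀ k ∈ Finset.range (2 ^ n),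
          |p (dy n (k + 1)) ω - p (dy n k) ω| < ε := by
        intro k _
        have hdist : dist (dy n (k + 1)) (dy n k) < δ := by
          rw [Subtype.dist_eq, Real.dist_eq]
          calc |(dy n (k+1) : ℝ) - (dy n k : ℝ)| ≤ 1/2^n := dy_mesh n k
            _ ≤ (1/2)^n₀ := hmesh
            _ < δ := hn₀
        have := hδ' hdist
        simpa [Real.dist_eq] using this
      have hDlt : D n ω < ε := (Finset.sup'_lt_iff (hne n)).2 hterm_lt
      rw [Real.dist_eq, sub_zero, abs_of_nonneg (hDnonneg n ω)]
      exact hDlt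
  have lim1 : x * (μ (⋃ n, H n)).toReal ≤ c :=
    le_of_tendsto (hμtend.const_mul x) (Filter.Eventually.of_forall fun n => (key n).1)
  have lim2 : c ≤ x * (μ (⋃ n, H n)).toReal := by
    have := ge_of_tendsto ((hμtend.const_mul x).add hDtend)
      (Filter.Eventually.of_forall fun n => (key n).2)
    simpa using this
  linarith

lemma iSup_comp_denseSeq {g : unitInterval → ℝ} (hg : Continuous g) (hb : ∀ t, g t ≤ 1) :
    ⨆ t, g t = ⨆ k, g (TopologicalSpace.denseSeq unitInterval k) := by
  set u := TopologicalSpace.denseSeq unitInterval with hu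
  have hb1 : BddAbove (Set.range g) := ⟨1, by rintro _ ⟨t, rfl⟩; exact hb t⟩
  have hb2 : BddAbove (Set.range fun k => g (u k)) := ⟨1, by rintro _ ⟨k, rfl⟩; exact hb _⟩
  apply le_antisymm
  · refine ciSup_le fun t => ?_
    have ht : t ∈ closure (Set.range u) := TopologicalSpace.denseRange_denseSeq unitInterval t
    obtain ⟨v, hv_mem, hv_lim⟩ := mem_closure_iff_seq_limit.1 ht
    have hlim : Filter.Tendsto (fun j => g (v j)) Filter.atTop (nhds (g t)) :=
      (hg.tendsto t).comp hv_lim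
    refine le_of_tendsto hlim (Filter.Eventually.of_forall fun j => ?_)
    obtain ⟨i, hi⟩ := hv_mem j
    exact hi ▸ le_ciSup hb2 i
  · exact ciSup_le fun k => le_ciSup hb1 (u k)

lemma measurable_pathSup {Ω : Type*} {_m0 : MeasurableSpace Ω} {p : unitInterval → Ω → ℝ}
    (hmeasp : ∀ t, Measurable (p t)) (hcont : ∀ ω, Continuous fun t => p t ω)
    (hb : ∀ t ω, p t ω ≤ 1) : Measurable fun ω => ⨆ t, p t ω := by
  have h : (fun ω => ⨆ t, p t ω)
      = fun ω => ⨆ k, p (TopologicalSpace.denseSeq unitInterval k) ω :=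
    funext fun ω => iSup_comp_denseSeq (hcont ω) (fun t => hb t ω)
  rw [h]
  exact Measurable.iSup fun k => hmeasp _

lemma core {Ω : Type*} {m0 : MeasurableSpace Ω} {μ : Measure Ω} [IsProbabilityMeasure μ]
    {ℱ : Filtration unitInterval m0} {p : unitInterval → Ω → ℝ} {c : ℝ}
    (hmart : Martingale p ℱ μ) (hcont : ∀ ω, Continuous fun t => p t ω)
    (hbdd : ∀ t ω, p t ω ∈ Set.Icc (0:ℝ) 1) (hp0 : ∀ ω, p 0 ω = c)
    (hterm : ∀ᵐ ω ∂μ, p 1 ω = 0 ∨ p 1 ω = 1) (hc0 : 0 < c)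
    {x : ℝ} (hx1 : c ≤ x) (hx2 : x < 1) :
    (μ {ω | (⨆ t, p t ω) ≤ x}).toReal = 1 - c / x := by
  have hmeasp : ∀ t, Measurable (p t) := fun t =>
    ((hmart.stronglyAdapted t).measurable).mono (ℱ.le t) le_rfl
  set S : Ω → ℝ := fun ω => ⨆ t, p t ω with hSdef
  have hSmeas : Measurable S :=
    measurable_pathSup hmeasp hcont (fun t ω => (hbdd t ω).2)
  have hbA : ∀ ω, BddAbove (Set.range fun t => p t ω) :=
    fun ω => ⟨1, by rintro _ ⟨t, rfl⟩; exact (hbdd t ω).2⟩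
  have hSge : ∀ (t : unitInterval) ω, p t ω ≤ S ω := fun t ω => le_ciSup (hbA ω) t
  have hA : ∀ y, c < y → y < 1 →
      y * (μ (⋃ n, {ω | ∃ k ≤ 2 ^ n, y ≤ p (dy n k) ω})).toReal = c :=
    fun y h1 h2 => stepA hmart hcont hbdd hp0 hterm h1 h2
  have hsub1 : ∀ y, (⋃ n, {ω | ∃ k ≤ 2 ^ n, y ≤ p (dy n k) ω}) ⊆ {ω | y ≤ S ω} := by
    intro y ω hω
    obtain ⟨n, k, _hk, hx⟩ := Set.mem_iUnion.1 hω
    exact le_trans hx (hSge _ ω)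
  have hsub2 : ∀ y, {ω | y < S ω} ⊆ ⋃ n, {ω | ∃ k ≤ 2 ^ n, y ≤ p (dy n k) ω} := by
    intro y ω hω
    have hω' : y < ⨆ t, p t ω := hω
    obtain ⟨t, ht⟩ := exists_lt_of_lt_ciSup hω'
    have hU : IsOpen ((fun t => p t ω) ⁻¹' Set.Ioi y) := (hcont ω).isOpen_preimage _ isOpen_Ioi
    obtain ⟨s, hs_mem, hs_U⟩ := dy_dense.exists_mem_open hU ⟨t, ht⟩
    obtain ⟨n, k, hk, rfl⟩ := hs_mem
    exact Set.mem_iUnion.2 ⟨n, k, hk, le_of_lt hs_U⟩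
  have hT : ∀ y, c ≤ y → y < 1 → (μ {ω | y < S ω}).toReal = c / y := by
    intro y hy1 hy2
    have hy0 : 0 < y := lt_of_lt_of_le hc0 hy1
    have hle1 : ∀ s : Set Ω, (μ s).toReal ≤ 1 := by
      intro s
      calc (μ s).toReal ≤ (μ Set.univ).toReal :=
        ENNReal.toReal_mono (measure_ne_top μ _) (measure_mono (Set.subset_univ s))
      _ = 1 := by simp
    have upper : (μ {ω | y < S ω}).toReal ≤ c / y := by
      rcases eq_or_lt_of_le hy1 with heq | hy1'
      · rw [← heq, div_self (ne_of_gt hc0)]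
        exact hle1 _
      · have hAy := hA y hy1' hy2
        have hAy' : (μ (⋃ n, {ω | ∃ k ≤ 2 ^ n, y ≤ p (dy n k) ω})).toReal = c / y := by
          field_simp at hAy ⊢
          linarith
        calc (μ {ω | y < S ω}).toReal
            ≤ (μ (⋃ n, {ω | ∃ k ≤ 2 ^ n, y ≤ p (dy n k) ω})).toReal :=
          ENNReal.toReal_mono (measure_ne_top μ _) (measure_mono (hsub2 y))
          _ = c / y := hAy'
    have lower : c / y ≤ (μ {ω | y < S ω}).toReal := by
      have key : ∀ z, y < z → z < 1 → c / z ≤ (μ {ω | y < S ω}).toReal := by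
        intro z hz1 hz2
        have hcz : c < z := lt_of_le_of_lt hy1 hz1
        have hAz := hA z hcz hz2
        have hAz' : (μ (⋃ n, {ω | ∃ k ≤ 2 ^ n, z ≤ p (dy n k) ω})).toReal = c / z := by
          have hz0 : (0:ℝ) < z := lt_trans hc0 hcz
          field_simp at hAz ⊢
          linarith
        have hsubz : (⋃ n, {ω | ∃ k ≤ 2 ^ n, z ≤ p (dy n k) ω}) ⊆ {ω | y < S ω} :=
          fun ω hω => lt_of_lt_of_le hz1 (hsub1 z hω)
        calc c / z = (μ (⋃ n, {ω | ∃ k ≤ 2 ^ n, z ≤ p (dy n k) ω})).toReal := hAz'.symm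
          _ ≤ (μ {ω | y < S ω}).toReal :=
            ENNReal.toReal_mono (measure_ne_top μ _) (measure_mono hsubz)
      set z : ℕ → ℝ := fun j => y + (1 - y) / (j + 2) with hz
      have hz1 : ∀ j, y < z j := by
        intro j
        have : (0:ℝ) < (1 - y) / ((j:ℝ) + 2) := div_pos (by linarith) (by positivity)
        simp only [hz]
        linarith
      have hz2 : ∀ j, z j < 1 := by
        intro j
        have h1y : (0:ℝ) < 1 - y := by linarith
        have : (1 - y) / ((j:ℝ) + 2) < 1 - y := by
          apply div_lt_self h1y
          have : (0:ℝ) ≤ (j:ℝ) := Nat.cast_nonneg j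
          linarith
        simp only [hz]
        linarith
      have hztend : Filter.Tendsto z Filter.atTop (nhds y) := by
        have h2 : Filter.Tendsto (fun j : ℕ => (1 - y) / ((j:ℝ) + 2)) Filter.atTop (nhds 0) :=
          Filter.Tendsto.div_atTop tendsto_const_nhds
            (Filter.tendsto_atTop_add_const_right _ 2 tendsto_natCast_atTop_atTop)
        have h3 := Filter.Tendsto.add (tendsto_const_nhds (x := y)) h2
        simpa using h3
      have hdiv : Filter.Tendsto (fun j => c / z j) Filter.atTop (nhds (c / y)) :=
        tendsto_const_nhds.div hztend (ne_of_gt hy0)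
      exact le_of_tendsto hdiv (Filter.Eventually.of_forall fun j => key (z j) (hz1 j) (hz2 j))
    linarith
  have hset : {ω | S ω ≤ x} = {ω | x < S ω}ᶜ := by
    ext ω; simp [not_lt]
  have hmeasx : MeasurableSet {ω | x < S ω} := measurableSet_lt measurable_const hSmeas
  rw [hset, measure_compl hmeasx (measure_ne_top μ _), measure_univ,
    ENNReal.toReal_sub_of_le prob_le_one ENNReal.one_ne_top, ENNReal.toReal_one,
    hT x hx1 hx2]

theorem stmt_9 {Ω : Type*} {m0 : MeasurableSpace Ω} {μ : Measure Ω}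
    [IsProbabilityMeasure μ]
    {ℱ : Filtration unitInterval m0} {p : unitInterval → Ω → ℝ} {Y : Ω → ℝ} {p₀ : ℝ}
    (hmart : Martingale p ℱ μ)
    (hcont : ∀ ω, Continuous fun t => p t ω)
    (hbdd : ∀ t ω, p t ω ∈ Set.Icc (0:ℝ) 1)
    (hp0 : ∀ ω, p 0 ω = p₀)
    (hY : ∀ᵐ ω ∂μ, Y ω = 0 ∨ Y ω = 1)
    (hterm : ∀ᵐ ω ∂μ, p 1 ω = Y ω)
    (hprior : (μ {ω | Y ω = 1}).toReal = p₀)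
    (hhalf : 1/2 ≤ p₀) (hlt : p₀ < 1) :
    (∀ x : ℝ, x < 1 - p₀ →
      (μ {ω | (fun ω => if Y ω = 0 then ⨆ t, p t ω else ⨆ t, (1 - p t ω)) ω ≤ x}).toReal = 0) ∧
    (∀ x : ℝ, 1 - p₀ ≤ x → x < p₀ →
      (μ {ω | (fun ω => if Y ω = 0 then ⨆ t, p t ω else ⨆ t, (1 - p t ω)) ω ≤ x}).toReal = 1 - (1 - p₀) / x) ∧
    (∀ x : ℝ, p₀ ≤ x → x < 1 →
      (μ {ω | (fun ω => if Y ω = 0 then ⨆ t, p t ω else ⨆ t, (1 - p t ω)) ω ≤ x}).toReal = 2 - 1 / x) := by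
  have hp₀pos : 0 < p₀ := by linarith
  have h1p₀ : 0 < 1 - p₀ := by linarith
  have hmeasp : ∀ t, Measurable (p t) := fun t =>
    ((hmart.stronglyAdapted t).measurable).mono (ℱ.le t) le_rfl
  -- the martingale q = 1 - p
  have hqmart : Martingale (fun t ω => 1 - p t ω) ℱ μ := by
    have h1 : Martingale ((fun (_ : unitInterval) (_ : Ω) => (1:ℝ)) - p) ℱ μ :=
      (martingale_const ℱ μ (1:ℝ)).sub hmart
    exact h1
  have hqcont : ∀ ω, Continuous fun t => 1 - p t ω :=
    fun ω => continuous_const.sub (hcont ω)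
  have hqbdd : ∀ t ω, (1 - p t ω) ∈ Set.Icc (0:ℝ) 1 := by
    intro t ω
    obtain ⟨h1, h2⟩ := hbdd t ω
    exact ⟨by linarith, by linarith⟩
  have hq0 : ∀ ω, 1 - p 0 ω = 1 - p₀ := fun ω => by rw [hp0]
  have hpterm : ∀ᵐ ω ∂μ, p 1 ω = 0 ∨ p 1 ω = 1 := by
    filter_upwards [hY, hterm] with ω h01 ht
    rw [ht]; exact h01
  have hqterm : ∀ᵐ ω ∂μ, 1 - p 1 ω = 0 ∨ 1 - p 1 ω = 1 := by
    filter_upwards [hpterm] with ω h01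
    rcases h01 with h | h <;> rw [h] <;> simp
  have corep : ∀ x : ℝ, p₀ ≤ x → x < 1 →
      (μ {ω | (⨆ t, p t ω) ≤ x}).toReal = 1 - p₀ / x :=
    fun x h1 h2 => core hmart hcont hbdd hp0 hpterm hp₀pos h1 h2
  have coreq : ∀ x : ℝ, 1 - p₀ ≤ x → x < 1 →
      (μ {ω | (⨆ t, (1 - p t ω)) ≤ x}).toReal = 1 - (1 - p₀) / x :=
    fun x h1 h2 => core hqmart hqcont hqbdd hq0 hqterm h1p₀ h1 h2
  -- sup bounds
  have hbAp : ∀ ω, BddAbove (Set.range fun t => p t ω) :=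
    fun ω => ⟨1, by rintro _ ⟨t, rfl⟩; exact (hbdd t ω).2⟩
  have hbAq : ∀ ω, BddAbove (Set.range fun t => 1 - p t ω) :=
    fun ω => ⟨1, by rintro _ ⟨t, rfl⟩; exact (hqbdd t ω).2⟩
  have hSp_ge : ∀ (t : unitInterval) ω, p t ω ≤ ⨆ t, p t ω :=
    fun t ω => le_ciSup (hbAp ω) t
  have hSq_ge : ∀ (t : unitInterval) ω, 1 - p t ω ≤ ⨆ t, (1 - p t ω) :=
    fun t ω => le_ciSup (hbAq ω) t
  have hSp0 : ∀ ω, p₀ ≤ ⨆ t, p t ω := fun ω => (hp0 ω) ▸ hSp_ge 0 ω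
  have hSq0 : ∀ ω, 1 - p₀ ≤ ⨆ t, (1 - p t ω) := fun ω => (hq0 ω) ▸ hSq_ge 0 ω
  -- measurability of the sups
  have hSpmeas : Measurable fun ω => ⨆ t, p t ω :=
    measurable_pathSup hmeasp hcont (fun t ω => (hbdd t ω).2)
  have hSqmeas : Measurable fun ω => ⨆ t, (1 - p t ω) :=
    measurable_pathSup (fun t => measurable_const.sub (hmeasp t)) hqcont
      (fun t ω => (hqbdd t ω).2)
  refine ⟨?_, ?_, ?_⟩
  · -- part 1
    intro x hx
    have hempty : {ω | (fun ω => if Y ω = 0 then ⨆ t, p t ω else ⨆ t, (1 - p t ω)) ω ≤ x} = ∅ := by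
      ext ω
      simp only [Set.mem_setOf_eq, Set.mem_empty_iff_false, iff_false, not_le]
      by_cases hYω : Y ω = 0
      · rw [if_pos hYω]
        have := hSp0 ω
        linarith
      · rw [if_neg hYω]
        have := hSq0 ω
        linarith
    rw [hempty]
    simp
  · -- part 2
    intro x hx1 hx2
    have hae : {ω | (fun ω => if Y ω = 0 then ⨆ t, p t ω else ⨆ t, (1 - p t ω)) ω ≤ x}
        =ᵐ[μ] {ω | (⨆ t, (1 - p t ω)) ≤ x} := by
      rw [Filter.eventuallyEq_set]
      filter_upwards [hY, hterm] with ω h01 ht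
      show ((fun ω => if Y ω = 0 then ⨆ t, p t ω else ⨆ t, (1 - p t ω)) ω ≤ x)
        ↔ ((⨆ t, (1 - p t ω)) ≤ x)
      simp only
      by_cases hYω : Y ω = 0
      · rw [if_pos hYω]
        refine iff_of_false (by linarith [hSp0 ω]) ?_
        have hp1 : p 1 ω = 0 := by rw [ht, hYω]
        have := hSq_ge 1 ω
        rw [hp1] at this
        push_neg
        linarith
      · rw [if_neg hYω]
    rw [measure_congr hae]
    exact coreq x hx1 (lt_trans hx2 hlt)
  · -- part 3
    intro x hx1 hx2
    have hae : {ω | (fun ω => if Y ω = 0 then ⨆ t, p t ω else ⨆ t, (1 - p t ω)) ω ≤ x}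
        =ᵐ[μ] (({ω | (⨆ t, p t ω) ≤ x} ∪ {ω | (⨆ t, (1 - p t ω)) ≤ x} : Set Ω)) := by
      rw [Filter.eventuallyEq_set]
      filter_upwards [hY, hterm] with ω h01 ht
      show ((fun ω => if Y ω = 0 then ⨆ t, p t ω else ⨆ t, (1 - p t ω)) ω ≤ x)
        ↔ (((⨆ t, p t ω) ≤ x) ∨ ((⨆ t, (1 - p t ω)) ≤ x))
      simp only
      by_cases hYω : Y ω = 0
      · rw [if_pos hYω]
        have hp1 : p 1 ω = 0 := by rw [ht, hYω]
        have hSq1 : (1:ℝ) ≤ ⨆ t, (1 - p t ω) := by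
          have h := hSq_ge 1 ω
          rw [hp1] at h
          simpa using h
        constructor
        · exact fun h => Or.inl h
        · rintro (h | h)
          · exact h
          · linarith
      · rw [if_neg hYω]
        have hY1 : Y ω = 1 := h01.resolve_left hYω
        have hp1 : p 1 ω = 1 := by rw [ht, hY1]
        have hSp1 : (1:ℝ) ≤ ⨆ t, p t ω := by
          have h := hSp_ge 1 ω
          rw [hp1] at h
          exact h
        constructor
        · exact fun h => Or.inr h
        · rintro (h | h)
          · linarith
          · exact h
    rw [measure_congr hae]
    -- the two sets are a.e. disjoint
    have hApB : MeasurableSet {ω | (⨆ t, p t ω) ≤ x} :=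
      measurableSet_le hSpmeas measurable_const
    have hBqB : MeasurableSet {ω | (⨆ t, (1 - p t ω)) ≤ x} :=
      measurableSet_le hSqmeas measurable_const
    have hinter : μ ({ω | (⨆ t, p t ω) ≤ x} ∩ {ω | (⨆ t, (1 - p t ω)) ≤ x}) = 0 := by
      have hnull : μ {ω | ¬ (p 1 ω = 0 ∨ p 1 ω = 1)} = 0 := by
        rw [ae_iff] at hpterm
        exact hpterm
      refine measure_mono_null ?_ hnull
      rintro ω ⟨h1, h2⟩
      simp only [Set.mem_setOf_eq] at h1 h2 ⊢
      rintro (h | h)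
      · have hh := hSq_ge 1 ω
        rw [h] at hh
        simp only [sub_zero] at hh
        linarith
      · have hh := hSp_ge 1 ω
        rw [h] at hh
        linarith
    have hunion : μ ({ω | (⨆ t, p t ω) ≤ x} ∪ {ω | (⨆ t, (1 - p t ω)) ≤ x})
        = μ {ω | (⨆ t, p t ω) ≤ x} + μ {ω | (⨆ t, (1 - p t ω)) ≤ x} := by
      have := measure_union_add_inter {ω | (⨆ t, p t ω) ≤ x} hBqB (μ := μ)
      rw [hinter, add_zero] at this
      exact this
    rw [hunion, ENNReal.toReal_add (measure_ne_top μ _) (measure_ne_top μ _)]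
    rw [corep x hx1 hx2, coreq x (by linarith) hx2]
    have hx0 : x ≠ 0 := ne_of_gt (by linarith)
    field_simp
    ring
end

section
/- In the symmetric two-player case p_0 = 1/2 with continuous-path win-probability martingales, the maximum win probability M_λ attained by the eventual loser satisfies P(M_λ ≤ x) = 2 − 1/x for x ∈ [1/2, 1), P(M_λ ≤ x) = 0 for x < 1/2, and P(M_λ = 1) = 0. In particular P(M_λ ≥ 2/3) = 1/2. -/
open MeasureTheory ProbabilityTheory unitInterval Set

noncomputable section EL

def gridT (n k : ℕ) : unitInterval :=
  ⟨min ((k:ℝ)/2^n) 1, by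
    constructor
    · exact le_min (by positivity) zero_le_one
    · exact min_le_right _ _⟩

lemma gridT_zero (n : ℕ) : gridT n 0 = 0 := by
  simp [gridT]

lemma gridT_coe {n k : ℕ} (h : k ≤ 2^n) : (gridT n k : ℝ) = (k:ℝ)/2^n := by
  simp only [gridT]
  rw [min_eq_left]
  rw [div_le_one (by positivity)]
  exact_mod_cast h

lemma gridT_top (n : ℕ) : gridT n (2^n) = 1 := by
  have := gridT_coe (le_refl (2^n))
  apply Subtype.ext
  rw [this]
  field_simp
  simp

lemma gridT_mono (n : ℕ) : Monotone (gridT n) := by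
  intro a b hab
  show (gridT n a : ℝ) ≤ gridT n b
  simp only [gridT]
  apply min_le_min _ le_rfl
  have : (a:ℝ) ≤ b := by exact_mod_cast hab
  gcongr

lemma gridT_double (n k : ℕ) : gridT (n+1) (2*k) = gridT n k := by
  apply Subtype.ext
  simp only [gridT]
  congr 1
  rw [pow_succ]
  push_cast
  ring

/-- nat ceil grid approximation -/
lemma grid_approx {r : ℝ} (hr : r ∈ Icc (0:ℝ) 1) (n : ℕ) :
    ⌈r * 2^n⌉₊ ≤ 2^n ∧ r ≤ (⌈r * 2^n⌉₊ : ℝ)/2^n ∧ (⌈r * 2^n⌉₊ : ℝ)/2^n ≤ r + (2^n)⁻¹ := by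
  have h2 : (0:ℝ) < 2^n := by positivity
  refine ⟨?_, ?_, ?_⟩
  · rw [Nat.ceil_le]
    push_cast
    nlinarith [hr.2]
  · rw [le_div_iff₀ h2]
    exact Nat.le_ceil _
  · rw [div_le_iff₀ h2]
    have := Nat.ceil_lt_add_one (by nlinarith [hr.1] : (0:ℝ) ≤ r * 2^n)
    rw [add_mul]
    rw [inv_mul_cancel₀ (ne_of_gt h2)]
    linarith

variable {Ω : Type*}

def hitSet (p : unitInterval → Ω → ℝ) (x : ℝ) (n : ℕ) (ω : Ω) : Set ℕ :=
  {k | k = 2^n ∨ x ≤ p (gridT n k) ω}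

def hitIdx (p : unitInterval → Ω → ℝ) (x : ℝ) (n : ℕ) (ω : Ω) : ℕ :=
  sInf (hitSet p x n ω)

def stopT (p : unitInterval → Ω → ℝ) (x : ℝ) (n : ℕ) (ω : Ω) : ℝ :=
  (hitIdx p x n ω : ℝ)/2^n

def limT (p : unitInterval → Ω → ℝ) (x : ℝ) (ω : Ω) : ℝ :=
  ⨅ n, stopT p x n ω

def pc (p : unitInterval → Ω → ℝ) (ω : Ω) : ℝ → ℝ :=
  fun r => p (projIcc 0 1 zero_le_one r) ω

def stopVal (p : unitInterval → Ω → ℝ) (x : ℝ) (n : ℕ) (ω : Ω) : ℝ :=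
  pc p ω (stopT p x n ω)

def limVal (p : unitInterval → Ω → ℝ) (x : ℝ) (ω : Ω) : ℝ :=
  pc p ω (limT p x ω)

variable {p : unitInterval → Ω → ℝ} {x : ℝ} {ω : Ω} {n : ℕ}

lemma hitSet_nonempty : (hitSet p x n ω).Nonempty := ⟨2^n, Or.inl rfl⟩

lemma hitIdx_mem : hitIdx p x n ω ∈ hitSet p x n ω := Nat.sInf_mem hitSet_nonempty

lemma hitIdx_le : hitIdx p x n ω ≤ 2^n := Nat.sInf_le (Or.inl rfl)

lemma stopT_mem : stopT p x n ω ∈ Icc (0:ℝ) 1 := by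
  rw [stopT]
  constructor
  · positivity
  · rw [div_le_one (by positivity)]
    have := hitIdx_le (p := p) (x := x) (n := n) (ω := ω)
    exact_mod_cast this

lemma pc_val (t : unitInterval) : pc p ω (t : ℝ) = p t ω := by
  simp only [pc]
  congr 1
  exact projIcc_val zero_le_one t

lemma pc_gridT (h : n ≤ n) {k : ℕ} (hk : k ≤ 2^n) : pc p ω ((k:ℝ)/2^n) = p (gridT n k) ω := by
  rw [← gridT_coe hk, pc_val]

lemma stopVal_eq : stopVal p x n ω = p (gridT n (hitIdx p x n ω)) ω := by
  rw [stopVal, stopT, pc_gridT le_rfl hitIdx_le]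

lemma stopT_antitone : Antitone fun n => stopT p x n ω := by
  apply antitone_nat_of_succ_le
  intro n
  have hmem : 2 * hitIdx p x n ω ∈ hitSet p x (n+1) ω := by
    rcases hitIdx_mem (p := p) (x := x) (n := n) (ω := ω) with h | h
    · left; rw [h, pow_succ, Nat.mul_comm]
    · right; rwa [gridT_double]
  have h1 : hitIdx p x (n+1) ω ≤ 2 * hitIdx p x n ω := Nat.sInf_le hmem
  rw [stopT, stopT, div_le_div_iff₀ (by positivity) (by positivity)]
  have h1' : (hitIdx p x (n+1) ω : ℝ) ≤ 2 * hitIdx p x n ω := by exact_mod_cast h1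
  push_cast [pow_succ]
  nlinarith [h1', pow_pos (by norm_num : (0:ℝ) < 2) n, (Nat.cast_nonneg (hitIdx p x n ω) : (0:ℝ) ≤ hitIdx p x n ω)]

lemma limT_le_stopT : limT p x ω ≤ stopT p x n ω :=
  ciInf_le ⟨0, by rintro r ⟨m, rfl⟩; exact (stopT_mem).1⟩ n

lemma limT_mem : limT p x ω ∈ Icc (0:ℝ) 1 := by
  constructor
  · exact le_ciInf fun m => (stopT_mem).1
  · exact (limT_le_stopT (n := 0)).trans (stopT_mem).2

lemma tendsto_stopT :
    Filter.Tendsto (fun n => stopT p x n ω) Filter.atTop (nhds (limT p x ω)) :=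
  tendsto_atTop_ciInf stopT_antitone ⟨0, by rintro r ⟨m, rfl⟩; exact (stopT_mem).1⟩

lemma continuous_pc (hc : Continuous fun t => p t ω) : Continuous (pc p ω) :=
  hc.comp continuous_projIcc

lemma tendsto_stopVal (hc : Continuous fun t => p t ω) :
    Filter.Tendsto (fun n => stopVal p x n ω) Filter.atTop (nhds (limVal p x ω)) :=
  ((continuous_pc hc).tendsto _).comp tendsto_stopT


lemma two_pow_inv_tendsto : Filter.Tendsto (fun n : ℕ => ((2:ℝ)^n)⁻¹) Filter.atTop (nhds 0) := by
  have h : ∀ n : ℕ, ((2:ℝ)^n)⁻¹ = (1/2)^n := fun n => by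
    rw [one_div, inv_pow]
  simp_rw [h]
  exact tendsto_pow_atTop_nhds_zero_of_lt_one (by norm_num) (by norm_num)

section Pointwise

variable (hc : Continuous fun t => p t ω)
include hc

lemma eventual_hit {r : ℝ} (hr : r ∈ Icc (0:ℝ) 1) (hgt : x < pc p ω r) :
    ∀ᶠ n in Filter.atTop, x ≤ stopVal p x n ω ∧ stopT p x n ω ≤ r + ((2:ℝ)^n)⁻¹ := by
  have hcpc : Continuous (pc p ω) := continuous_pc hc
  have hcont := (hcpc.tendsto r).eventually (eventually_gt_nhds hgt)
  rw [Metric.eventually_nhds_iff] at hcont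
  obtain ⟨δ, hδ, hball⟩ := hcont
  have h2n := two_pow_inv_tendsto
  filter_upwards [h2n.eventually (gt_mem_nhds hδ)] with n hn
  set k := ⌈r * 2^n⌉₊ with hk
  obtain ⟨hk1, hk2, hk3⟩ := grid_approx hr n
  have hgk : x < p (gridT n k) ω := by
    rw [← pc_gridT (p := p) (ω := ω) le_rfl hk1]
    apply hball
    rw [Real.dist_eq, abs_sub_lt_iff]
    constructor
    · linarith
    · linarith
  have hmem : k ∈ hitSet p x n ω := Or.inr hgk.le
  have hle : hitIdx p x n ω ≤ k := Nat.sInf_le hmem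
  have hstople : stopT p x n ω ≤ (k:ℝ)/2^n := by
    rw [stopT]
    have : (hitIdx p x n ω : ℝ) ≤ k := by exact_mod_cast hle
    gcongr
  constructor
  · rcases hitIdx_mem (p := p) (x := x) (n := n) (ω := ω) with h | h
    · -- hitIdx = 2^n, so k = 2^n too
      have hk2n : k = 2^n := le_antisymm hk1 (h ▸ hle)
      have hidxk : hitIdx p x n ω = k := by rw [h, hk2n]
      rw [stopVal_eq, hidxk]
      exact hgk.le
    · rw [stopVal_eq]; exact h
  · exact hstople.trans (by linarith)

lemma limT_le_of_lt {r : ℝ} (hr : r ∈ Icc (0:ℝ) 1) (hgt : x < pc p ω r) :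
    limT p x ω ≤ r := by
  by_contra hcon
  push_neg at hcon
  have h2n := two_pow_inv_tendsto
  have hev := (eventual_hit hc hr hgt).and
    (h2n.eventually (gt_mem_nhds (by linarith : (0:ℝ) < limT p x ω - r)))
  obtain ⟨n, ⟨_, hn1⟩, hn2⟩ := hev.exists
  have := limT_le_stopT (p := p) (x := x) (ω := ω) (n := n)
  linarith

lemma x_le_limVal (ht : ∃ t, x < p t ω) : x ≤ limVal p x ω := by
  obtain ⟨t, ht⟩ := ht
  have hgt : x < pc p ω (t : ℝ) := by rwa [pc_val]
  have := eventual_hit hc t.2 hgt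
  exact ge_of_tendsto (tendsto_stopVal hc) (this.mono fun n hn => hn.1)

lemma limVal_le (h0 : p 0 ω = 1/2) (hx : 1/2 < x) : limVal p x ω ≤ x := by
  by_cases hS : ∀ r ∈ Icc (0:ℝ) 1, pc p ω r ≤ x
  · exact hS _ limT_mem
  push_neg at hS
  obtain ⟨r0, hr0, hgt0⟩ := hS
  set S : Set ℝ := {r | r ∈ Icc (0:ℝ) 1 ∧ x < pc p ω r} with hSdef
  have hSne : S.Nonempty := ⟨r0, hr0, hgt0⟩
  have hSbdd : BddBelow S := ⟨0, fun r hr => hr.1.1⟩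
  set c := sInf S with hcdef
  have hle : ∀ r ∈ S, limT p x ω ≤ r := fun r hr => limT_le_of_lt hc hr.1 hr.2
  have hlimc : limT p x ω ≤ c := le_csInf hSne hle
  have hc1 : c ≤ 1 := (csInf_le hSbdd ⟨hr0, hgt0⟩).trans hr0.2
  have hbelow : ∀ s : ℝ, 0 ≤ s → s < c → pc p ω s ≤ x := by
    intro s hs0 hsc
    by_contra hcon
    push_neg at hcon
    have : s ∈ S := ⟨⟨hs0, by linarith⟩, hcon⟩
    exact absurd (csInf_le hSbdd this) (by linarith)
  rcases lt_or_eq_of_le hlimc with hlt | heq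
  · exact hbelow _ limT_mem.1 hlt
  · -- limT = c
    rcases eq_or_lt_of_le (le_csInf hSne fun r hr => hr.1.1 : (0:ℝ) ≤ c) with hc0 | hc0
    · -- c = 0
      rw [← hcdef] at hc0
      rw [limVal, heq, ← hc0]
      have : pc p ω ((0 : unitInterval) : ℝ) = p 0 ω := pc_val 0
      simp only [Set.Icc.coe_zero] at this
      rw [this, h0]
      linarith
    · -- c > 0, approximate from the left
      have hu : Filter.Tendsto (fun j : ℕ => c - c/(j+1)) Filter.atTop (nhds c) := by
        have h1 : Filter.Tendsto (fun j : ℕ => c/((j:ℝ)+1)) Filter.atTop (nhds 0) := by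
          have hb := tendsto_one_div_add_atTop_nhds_zero_nat.const_mul c
          rw [mul_zero] at hb
          refine hb.congr fun j => ?_
          rw [mul_one_div]
        have h2 : Filter.Tendsto (fun _ : ℕ => c) Filter.atTop (nhds c) := tendsto_const_nhds
        have h3 := h2.sub h1
        simpa using h3
      have hval : ∀ j : ℕ, pc p ω (c - c/(j+1)) ≤ x := by
        intro j
        have hpos : (0:ℝ) < c/(j+1) := by positivity
        apply hbelow
        · have : c/(j+1) ≤ c := by
            rw [div_le_iff₀ (by positivity)]
            nlinarith
          linarith
        · linarith
      have htend : Filter.Tendsto (fun j : ℕ => pc p ω (c - c/(j+1))) Filter.atTop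
          (nhds (pc p ω c)) := ((continuous_pc hc).tendsto c).comp hu
      have : pc p ω c ≤ x := le_of_tendsto htend (Filter.Eventually.of_forall hval)
      rwa [limVal, heq]

omit hc in
lemma limVal_eq_terminal (hforall : ∀ t, p t ω < x) : limVal p x ω = p 1 ω := by
  have hidx : ∀ n, hitIdx p x n ω = 2^n := by
    intro n
    rcases hitIdx_mem (p := p) (x := x) (n := n) (ω := ω) with h | h
    · exact h
    · exact absurd h (not_le.mpr (hforall _))
  have hstop : ∀ n, stopT p x n ω = 1 := by
    intro n
    rw [stopT, hidx]
    field_simp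
    simp
  have : limT p x ω = 1 := by
    rw [limT]
    simp_rw [hstop]
    exact ciInf_const
  rw [limVal, this]
  have h1 : pc p ω ((1 : unitInterval) : ℝ) = p 1 ω := pc_val 1
  simpa using h1

end Pointwise
section Meas

variable {m0 : MeasurableSpace Ω} {μ : Measure Ω} [IsProbabilityMeasure μ]
  {ℱ : Filtration unitInterval m0}

lemma meas_p (hmart : Martingale p ℱ μ) (t : unitInterval) : Measurable (fun ω => p t ω) :=
  ((hmart.stronglyAdapted t).mono (ℱ.le t)).measurable

lemma hitIdx_eq_iff {m : ℕ} :
    hitIdx p x n ω = m ↔ m ∈ hitSet p x n ω ∧ ∀ j < m, j ∉ hitSet p x n ω := by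
  constructor
  · intro h
    refine ⟨h ▸ hitIdx_mem, fun j hj hmem => ?_⟩
    have h2 : hitIdx p x n ω ≤ j := Nat.sInf_le hmem
    omega
  · rintro ⟨h1, h2⟩
    refine le_antisymm (Nat.sInf_le h1) ?_
    by_contra hcon
    push_neg at hcon
    exact h2 _ hcon hitIdx_mem

lemma measurableSet_mem_hitSet (hmart : Martingale p ℱ μ) (k n : ℕ) :
    MeasurableSet[ℱ (gridT n k)] {ω | k ∈ hitSet p x n ω} := by
  have : {ω | k ∈ hitSet p x n ω} =
      {ω : Ω | k = 2^n} ∪ {ω | x ≤ p (gridT n k) ω} := by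
    ext ω; rfl
  rw [this]
  apply MeasurableSet.union
  · exact MeasurableSet.const _
  · exact (hmart.stronglyAdapted (gridT n k)).measurable measurableSet_Ici

lemma measurable_hitIdx (hmart : Martingale p ℱ μ) (n : ℕ) :
    Measurable (hitIdx p x n) := by
  apply measurable_to_countable'
  intro m
  have : hitIdx p x n ⁻¹' {m} = {ω | m ∈ hitSet p x n ω} ∩
      ⋂ (j : ℕ) (_ : j < m), {ω | j ∈ hitSet p x n ω}ᶜ := by
    ext ω
    simp only [mem_preimage, mem_singleton_iff, hitIdx_eq_iff, mem_inter_iff, mem_iInter,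
      mem_compl_iff]
    rfl
  rw [this]
  apply MeasurableSet.inter
  · exact (ℱ.le _ _ (measurableSet_mem_hitSet hmart m n))
  · exact MeasurableSet.iInter fun j => MeasurableSet.iInter fun _ =>
      (ℱ.le _ _ (measurableSet_mem_hitSet hmart j n)).compl

lemma measurableSet_lt_hitIdx (hmart : Martingale p ℱ μ) (n m : ℕ) :
    MeasurableSet[ℱ (gridT n m)] {ω | m < hitIdx p x n ω} := by
  have : {ω | m < hitIdx p x n ω} = ⋂ (j : ℕ) (_ : j ≤ m), {ω | j ∈ hitSet p x n ω}ᶜ := by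
    ext ω
    simp only [mem_setOf_eq, mem_iInter, mem_compl_iff]
    constructor
    · intro h j hj hmem
      have h2 : hitIdx p x n ω ≤ j := Nat.sInf_le hmem
      omega
    · intro h
      by_contra hcon
      push_neg at hcon
      exact h _ hcon hitIdx_mem
  rw [this]
  refine MeasurableSet.iInter fun j => MeasurableSet.iInter fun hj => ?_
  exact (ℱ.mono (gridT_mono n hj) _ (measurableSet_mem_hitSet hmart j n)).compl

/-- the process stopped at time `min (hitIdx) m` on the grid -/
def Wstop (p : unitInterval → Ω → ℝ) (x : ℝ) (n m : ℕ) (ω : Ω) : ℝ :=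
  p (gridT n (min (hitIdx p x n ω) m)) ω

lemma Wstop_eq_sum (n m : ℕ) (ω : Ω) :
    Wstop p x n m ω = ∑ k ∈ Finset.range (m+1),
      if min (hitIdx p x n ω) m = k then p (gridT n k) ω else 0 := by
  rw [Finset.sum_ite_eq (Finset.range (m+1)) (min (hitIdx p x n ω) m)
    (fun k => p (gridT n k) ω), if_pos]
  · rfl
  · rw [Finset.mem_range]; omega

lemma measurable_Wstop (hmart : Martingale p ℱ μ) (n m : ℕ) :
    Measurable (Wstop p x n m) := by
  have : Wstop p x n m = fun ω => ∑ k ∈ Finset.range (m+1),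
      if min (hitIdx p x n ω) m = k then p (gridT n k) ω else 0 := by
    funext ω; exact Wstop_eq_sum n m ω
  rw [this]
  apply Finset.measurable_sum
  intro k _
  apply Measurable.ite _ (meas_p hmart _) measurable_const
  exact ((measurable_hitIdx hmart n).min measurable_const) (measurableSet_singleton k)

lemma Wstop_mem (hbdd : ∀ t ω, p t ω ∈ Icc (0:ℝ) 1) (n m : ℕ) (ω : Ω) :
    Wstop p x n m ω ∈ Icc (0:ℝ) 1 := hbdd _ _

lemma integrable_of_bdd {f : Ω → ℝ} (hf : AEStronglyMeasurable f μ)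
    (hb : ∀ ω, f ω ∈ Icc (0:ℝ) 1) : Integrable f μ := by
  refine Integrable.mono' (integrable_const 1) hf ?_
  refine Filter.Eventually.of_forall fun ω => ?_
  rw [Real.norm_eq_abs, abs_le]
  exact ⟨by linarith [(hb ω).1], (hb ω).2⟩

lemma stopVal_eq_Wstop (n : ℕ) (ω : Ω) : stopVal p x n ω = Wstop p x n (2^n) ω := by
  rw [stopVal_eq, Wstop, min_eq_left hitIdx_le]

lemma measurable_stopVal (hmart : Martingale p ℱ μ) (n : ℕ) :
    Measurable (stopVal p x n) := by
  have : stopVal p x n = Wstop p x n (2^n) := funext fun ω => stopVal_eq_Wstop n ω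
  rw [this]
  exact measurable_Wstop hmart n _

lemma integral_Wstop (hmart : Martingale p ℱ μ)
    (hbdd : ∀ t ω, p t ω ∈ Icc (0:ℝ) 1) (hp0 : ∀ ω, p 0 ω = 1/2) (n : ℕ) :
    ∀ m, ∫ ω, Wstop p x n m ω ∂μ = 1/2 := by
  intro m
  induction m with
  | zero =>
    have : Wstop p x n 0 = fun _ => (1/2 : ℝ) := by
      funext ω
      rw [Wstop, Nat.min_zero, gridT_zero, hp0]
    rw [this]
    simp
  | succ m ih =>
    have hdecomp : Wstop p x n (m+1) = fun ω => Wstop p x n m ω +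
        Set.indicator {ω | m < hitIdx p x n ω}
          (fun ω => p (gridT n (m+1)) ω - p (gridT n m) ω) ω := by
      funext ω
      by_cases h : m < hitIdx p x n ω
      · rw [Set.indicator_of_mem (show ω ∈ {ω | m < hitIdx p x n ω} from h)]
        have h1 : min (hitIdx p x n ω) (m+1) = min (hitIdx p x n ω) m + 1 := by omega
        have h2 : min (hitIdx p x n ω) m = m := by omega
        rw [Wstop, Wstop, h1, h2]
        ring
      · rw [Set.indicator_of_notMem (show ω ∉ {ω | m < hitIdx p x n ω} from h)]
        have h1 : min (hitIdx p x n ω) (m+1) = min (hitIdx p x n ω) m := by omega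
        rw [Wstop, Wstop, h1]
        ring
    have hEm0 : MeasurableSet {ω | m < hitIdx p x n ω} :=
      ℱ.le _ _ (measurableSet_lt_hitIdx hmart n m)
    have hint1 : Integrable (Wstop p x n m) μ :=
      integrable_of_bdd ((measurable_Wstop hmart n m).aestronglyMeasurable)
        (fun ω => Wstop_mem hbdd n m ω)
    have hint2 : Integrable (fun ω => p (gridT n (m+1)) ω - p (gridT n m) ω) μ :=
      (hmart.integrable _).sub (hmart.integrable _)
    have hint3 : Integrable (Set.indicator {ω | m < hitIdx p x n ω}
        (fun ω => p (gridT n (m+1)) ω - p (gridT n m) ω)) μ :=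
      hint2.indicator hEm0
    rw [hdecomp, integral_add hint1 hint3, ih, integral_indicator hEm0]
    have : ∫ ω in {ω | m < hitIdx p x n ω}, (p (gridT n (m+1)) ω - p (gridT n m) ω) ∂μ = 0 := by
      rw [integral_sub ((hmart.integrable _).restrict) ((hmart.integrable _).restrict)]
      have := hmart.setIntegral_eq (gridT_mono n (Nat.le_succ m)) (measurableSet_lt_hitIdx (x := x) hmart n m)
      rw [← this]
      ring
    rw [this]
    ring

lemma integral_stopVal (hmart : Martingale p ℱ μ)
    (hbdd : ∀ t ω, p t ω ∈ Icc (0:ℝ) 1) (hp0 : ∀ ω, p 0 ω = 1/2) (n : ℕ) :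
    ∫ ω, stopVal p x n ω ∂μ = 1/2 := by
  have : stopVal p x n = Wstop p x n (2^n) := funext fun ω => stopVal_eq_Wstop n ω
  rw [this]
  exact integral_Wstop hmart hbdd hp0 n _

end Meas
section Key

variable {m0 : MeasurableSpace Ω} {μ : Measure Ω} [IsProbabilityMeasure μ]
  {ℱ : Filtration unitInterval m0}

lemma limVal_mem (hbdd : ∀ t ω, p t ω ∈ Icc (0:ℝ) 1) (ω : Ω) :
    limVal p x ω ∈ Icc (0:ℝ) 1 := hbdd _ _

lemma stopVal_mem (hbdd : ∀ t ω, p t ω ∈ Icc (0:ℝ) 1) (n : ℕ) (ω : Ω) :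
    stopVal p x n ω ∈ Icc (0:ℝ) 1 := hbdd _ _

lemma aesm_limVal (hmart : Martingale p ℱ μ) (hcont : ∀ ω, Continuous fun t => p t ω) :
    AEStronglyMeasurable (limVal p x) μ := by
  apply aestronglyMeasurable_of_tendsto_ae (u := Filter.atTop) (f := fun n => stopVal p x n)
  · exact fun n => (measurable_stopVal hmart n).aestronglyMeasurable
  · exact Filter.Eventually.of_forall fun ω => tendsto_stopVal (hcont ω)

lemma integral_limVal (hmart : Martingale p ℱ μ) (hcont : ∀ ω, Continuous fun t => p t ω)
    (hbdd : ∀ t ω, p t ω ∈ Icc (0:ℝ) 1) (hp0 : ∀ ω, p 0 ω = 1/2) :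
    ∫ ω, limVal p x ω ∂μ = 1/2 := by
  have htend : Filter.Tendsto (fun n => ∫ ω, stopVal p x n ω ∂μ) Filter.atTop
      (nhds (∫ ω, limVal p x ω ∂μ)) := by
    apply tendsto_integral_of_dominated_convergence (bound := fun _ => (1:ℝ))
    · exact fun n => (measurable_stopVal hmart n).aestronglyMeasurable
    · exact integrable_const 1
    · intro n
      refine Filter.Eventually.of_forall fun ω => ?_
      rw [Real.norm_eq_abs, abs_le]
      have := stopVal_mem (x := x) hbdd n ω
      exact ⟨by linarith [this.1], this.2⟩
    · exact Filter.Eventually.of_forall fun ω => tendsto_stopVal (hcont ω)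
  have hconst : ∀ n, ∫ ω, stopVal p x n ω ∂μ = 1/2 :=
    fun n => integral_stopVal hmart hbdd hp0 n
  simp_rw [hconst] at htend
  exact tendsto_nhds_unique htend tendsto_const_nhds

lemma bddAbove_range_p (hbdd : ∀ t ω, p t ω ∈ Icc (0:ℝ) 1) (ω : Ω) :
    BddAbove (Set.range fun t => p t ω) := by
  refine ⟨1, ?_⟩
  rintro r ⟨t, rfl⟩
  exact (hbdd t ω).2

lemma iSup_eq_grid_iSup (hcont : ∀ ω, Continuous fun t => p t ω)
    (hbdd : ∀ t ω, p t ω ∈ Icc (0:ℝ) 1) (ω : Ω) :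
    (⨆ t, p t ω) = ⨆ nk : ℕ × ℕ, p (gridT nk.1 nk.2) ω := by
  have hbd1 : BddAbove (Set.range fun t => p t ω) := bddAbove_range_p hbdd ω
  have hbd2 : BddAbove (Set.range fun nk : ℕ × ℕ => p (gridT nk.1 nk.2) ω) := by
    refine ⟨1, ?_⟩
    rintro r ⟨nk, rfl⟩
    exact (hbdd _ ω).2
  apply le_antisymm
  · apply ciSup_le
    intro t
    -- approximate t by grid points
    have happrox : Filter.Tendsto (fun n => gridT n ⌈(t:ℝ) * 2^n⌉₊) Filter.atTop (nhds t) := by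
      rw [tendsto_subtype_rng]
      have h1 : ∀ n : ℕ, ((gridT n ⌈(t:ℝ) * 2^n⌉₊ : unitInterval) : ℝ) = (⌈(t:ℝ) * 2^n⌉₊ : ℝ)/2^n :=
        fun n => gridT_coe (grid_approx t.2 n).1
    -- squeeze
      have h2 : ∀ n : ℕ, |((gridT n ⌈(t:ℝ) * 2^n⌉₊ : unitInterval) : ℝ) - (t:ℝ)| ≤ ((2:ℝ)^n)⁻¹ := by
        intro n
        rw [h1 n, abs_sub_le_iff]
        obtain ⟨-, ha, hb⟩ := grid_approx t.2 n
        constructor <;> linarith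
      have h3 : Filter.Tendsto (fun n : ℕ => ((gridT n ⌈(t:ℝ) * 2^n⌉₊ : unitInterval) : ℝ) - (t:ℝ))
          Filter.atTop (nhds 0) := by
        apply squeeze_zero_norm h2 two_pow_inv_tendsto
      have := h3.add_const (t:ℝ)
      simpa using this
    have hptend : Filter.Tendsto (fun n => p (gridT n ⌈(t:ℝ) * 2^n⌉₊) ω) Filter.atTop
        (nhds (p t ω)) := ((hcont ω).tendsto t).comp happrox
    refine le_of_tendsto hptend (Filter.Eventually.of_forall fun n => ?_)
    exact le_ciSup hbd2 (⟨n, ⌈(t:ℝ) * 2^n⌉₊⟩ : ℕ × ℕ)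
  · apply ciSup_le
    intro nk
    exact le_ciSup hbd1 (gridT nk.1 nk.2)

lemma measurable_supP (hmart : Martingale p ℱ μ) (hcont : ∀ ω, Continuous fun t => p t ω)
    (hbdd : ∀ t ω, p t ω ∈ Icc (0:ℝ) 1) :
    Measurable (fun ω => ⨆ t, p t ω) := by
  have : (fun ω => ⨆ t, p t ω) = fun ω => ⨆ nk : ℕ × ℕ, p (gridT nk.1 nk.2) ω :=
    funext fun ω => iSup_eq_grid_iSup hcont hbdd ω
  rw [this]
  exact Measurable.iSup fun nk => meas_p hmart _

lemma lt_iSup_iff_exists (hcont : ∀ ω, Continuous fun t => p t ω)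
    (hbdd : ∀ t ω, p t ω ∈ Icc (0:ℝ) 1) (ω : Ω) :
    x < (⨆ t, p t ω) ↔ ∃ t, x < p t ω := by
  constructor
  · intro h
    obtain ⟨t0, -, ht0⟩ := isCompact_univ.exists_isMaxOn Set.univ_nonempty (hcont ω).continuousOn
    refine ⟨t0, lt_of_lt_of_le h (ciSup_le fun t => ht0 (Set.mem_univ t))⟩
  · rintro ⟨t, ht⟩
    exact lt_of_lt_of_le ht (le_ciSup (bddAbove_range_p hbdd ω) t)

lemma key_bounds (hmart : Martingale p ℱ μ) (hcont : ∀ ω, Continuous fun t => p t ω)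
    (hbdd : ∀ t ω, p t ω ∈ Icc (0:ℝ) 1) (hp0 : ∀ ω, p 0 ω = 1/2)
    (hterm01 : ∀ᵐ ω ∂μ, p 1 ω = 0 ∨ p 1 ω = 1)
    (hx : 1/2 < x) (hx1 : x < 1) :
    x * (μ {ω | x < ⨆ t, p t ω}).toReal ≤ 1/2 ∧
      1/2 ≤ x * (μ {ω | x ≤ ⨆ t, p t ω}).toReal := by
  have hm1 : MeasurableSet {ω | x < ⨆ t, p t ω} :=
    measurableSet_lt measurable_const (measurable_supP hmart hcont hbdd)
  have hm2 : MeasurableSet {ω | x ≤ ⨆ t, p t ω} :=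
    measurableSet_le measurable_const (measurable_supP hmart hcont hbdd)
  have hintlim : Integrable (limVal p x) μ :=
    integrable_of_bdd (aesm_limVal hmart hcont) (limVal_mem hbdd)
  have hIL : ∫ ω, limVal p x ω ∂μ = 1/2 := integral_limVal hmart hcont hbdd hp0
  constructor
  · -- lower event bound
    have hmono : ∀ ω, Set.indicator {ω | x < ⨆ t, p t ω} (fun _ => x) ω ≤ limVal p x ω := by
      intro ω
      by_cases h : ω ∈ {ω | x < ⨆ t, p t ω}
      · rw [Set.indicator_of_mem h]
        exact x_le_limVal (hcont ω) ((lt_iSup_iff_exists hcont hbdd ω).mp h)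
      · rw [Set.indicator_of_notMem h]
        exact (limVal_mem hbdd ω).1
    have hint1 : Integrable (Set.indicator {ω | x < ⨆ t, p t ω} (fun _ => x)) μ :=
      (integrable_const x).indicator hm1
    have := integral_mono hint1 hintlim hmono
    rw [integral_indicator_const _ hm1] at this
    rw [hIL] at this
    calc x * (μ {ω | x < ⨆ t, p t ω}).toReal
        = (μ {ω | x < ⨆ t, p t ω}).toReal • x := by rw [smul_eq_mul]; ring
      _ ≤ 1/2 := this
  · -- upper event bound
    have hmono : ∀ᵐ ω ∂μ, limVal p x ω ≤
        Set.indicator {ω | x ≤ ⨆ t, p t ω} (fun _ => x) ω := by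
      filter_upwards [hterm01] with ω h01
      by_cases h : ω ∈ {ω | x ≤ ⨆ t, p t ω}
      · rw [Set.indicator_of_mem h]
        exact limVal_le (hcont ω) (hp0 ω) hx
      · rw [Set.indicator_of_notMem h]
        have hlt : (⨆ t, p t ω) < x := not_le.mp h
        have hall : ∀ t, p t ω < x := fun t =>
          lt_of_le_of_lt (le_ciSup (bddAbove_range_p hbdd ω) t) hlt
        rw [limVal_eq_terminal hall]
        rcases h01 with h0 | h1
        · rw [h0]
        · exact absurd (h1 ▸ hall 1) (by linarith)
    have hint1 : Integrable (Set.indicator {ω | x ≤ ⨆ t, p t ω} (fun _ => x)) μ :=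
      (integrable_const x).indicator hm2
    have := integral_mono_ae hintlim hint1 hmono
    rw [integral_indicator_const _ hm2, hIL] at this
    calc (1:ℝ)/2 ≤ (μ {ω | x ≤ ⨆ t, p t ω}).toReal • x := this
      _ = x * (μ {ω | x ≤ ⨆ t, p t ω}).toReal := by rw [smul_eq_mul]; ring

end Key
section Derive

variable {m0 : MeasurableSpace Ω} {μ : Measure Ω} [IsProbabilityMeasure μ]
  {ℱ : Filtration unitInterval m0}

lemma tendsto_shift_seq (a b : ℝ) :
    Filter.Tendsto (fun j : ℕ => a - b/((j:ℝ)+2)) Filter.atTop (nhds a) := by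
  have h1 : Filter.Tendsto (fun j : ℕ => b/((j:ℝ)+2)) Filter.atTop (nhds 0) := by
    apply Filter.Tendsto.div_atTop (tendsto_const_nhds)
    exact Filter.tendsto_atTop_add_const_right _ 2 tendsto_natCast_atTop_atTop
  have h2 : Filter.Tendsto (fun _ : ℕ => a) Filter.atTop (nhds a) := tendsto_const_nhds
  simpa using h2.sub h1

lemma tendsto_inv_shift_seq {a b : ℝ} (ha : a ≠ 0)
    (hne : ∀ j : ℕ, a - b/((j:ℝ)+2) ≠ 0) :
    Filter.Tendsto (fun j : ℕ => 1/(2*(a - b/((j:ℝ)+2)))) Filter.atTop (nhds (1/(2*a))) := by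
  apply Filter.Tendsto.div tendsto_const_nhds (Filter.Tendsto.const_mul 2 (tendsto_shift_seq a b))
  simpa using ha

variable (hmart : Martingale p ℱ μ) (hcont : ∀ ω, Continuous fun t => p t ω)
  (hbdd : ∀ t ω, p t ω ∈ Icc (0:ℝ) 1) (hp0 : ∀ ω, p 0 ω = 1/2)
  (hterm01 : ∀ᵐ ω ∂μ, p 1 ω = 0 ∨ p 1 ω = 1)
include hmart hcont hbdd hp0 hterm01

lemma sup_dist (hx : 1/2 < x) (hx1 : x < 1) :
    (μ {ω | x < ⨆ t, p t ω}).toReal = 1/(2*x) ∧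
      (μ {ω | x ≤ ⨆ t, p t ω}).toReal = 1/(2*x) := by
  have hxpos : (0:ℝ) < x := by linarith
  have key := fun (y : ℝ) (hy : 1/2 < y) (hy1 : y < 1) =>
    key_bounds hmart hcont hbdd hp0 hterm01 hy hy1
  -- basic one-sided bounds
  have hub : ∀ y : ℝ, 1/2 < y → y < 1 → (μ {ω | y < ⨆ t, p t ω}).toReal ≤ 1/(2*y) := by
    intro y hy hy1
    have := (key y hy hy1).1
    rw [le_div_iff₀ (by linarith : (0:ℝ) < 2*y)]
    nlinarith [this]
  have hlb : ∀ y : ℝ, 1/2 < y → y < 1 → 1/(2*y) ≤ (μ {ω | y ≤ ⨆ t, p t ω}).toReal := by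
    intro y hy hy1
    have := (key y hy hy1).2
    rw [div_le_iff₀ (by linarith : (0:ℝ) < 2*y)]
    nlinarith [this]
  -- the two sequences
  have hmono_meas : ∀ {s t : Set Ω}, s ⊆ t →
      (μ s).toReal ≤ (μ t).toReal := fun hsub =>
    ENNReal.toReal_mono (measure_ne_top μ _) (measure_mono hsub)
  constructor
  · -- x < sup : squeeze from above and below
    apply le_antisymm (hub x hx hx1)
    -- approach x from above with v j = x + (1-x)/(j+2) = x - (-(1-x))/(j+2)
    have hv : ∀ j : ℕ, x - (-(1-x))/((j:ℝ)+2) = x + (1-x)/((j:ℝ)+2) := fun j => by ring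
    have hvbound : ∀ j : ℕ, 1/2 < x + (1-x)/((j:ℝ)+2) ∧ x + (1-x)/((j:ℝ)+2) < 1 := by
      intro j
      have hj : (0:ℝ) < (j:ℝ)+2 := by positivity
      have h2 : (2:ℝ) ≤ (j:ℝ)+2 := by
        have : (0:ℝ) ≤ j := Nat.cast_nonneg j
        linarith
      constructor
      · have : 0 < (1-x)/((j:ℝ)+2) := by
          apply div_pos (by linarith) hj
        linarith
      · have : (1-x)/((j:ℝ)+2) ≤ (1-x)/2 := by
          apply div_le_div_of_nonneg_left (by linarith) (by norm_num) h2
        linarith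
    have hseq : Filter.Tendsto (fun j : ℕ => 1/(2*(x + (1-x)/((j:ℝ)+2)))) Filter.atTop
        (nhds (1/(2*x))) := by
      have := tendsto_inv_shift_seq (a := x) (b := -(1-x)) (by linarith)
        (fun j => by rw [hv j]; linarith [(hvbound j).1])
      simpa only [hv] using this
    refine le_of_tendsto hseq (Filter.Eventually.of_forall fun j => ?_)
    calc 1/(2*(x + (1-x)/((j:ℝ)+2)))
        ≤ (μ {ω | x + (1-x)/((j:ℝ)+2) ≤ ⨆ t, p t ω}).toReal :=
          hlb _ (hvbound j).1 (hvbound j).2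
      _ ≤ (μ {ω | x < ⨆ t, p t ω}).toReal := by
          apply hmono_meas
          intro ω hω
          simp only [mem_setOf_eq] at hω ⊢
          have : 0 < (1-x)/((j:ℝ)+2) := by
            have hj : (0:ℝ) < (j:ℝ)+2 := by positivity
            apply div_pos (by linarith) hj
          linarith
  · -- x ≤ sup
    apply le_antisymm
    · -- approach x from below with u j = x - (x-1/2)/(j+2)
      have hubound : ∀ j : ℕ, 1/2 < x - (x-1/2)/((j:ℝ)+2) ∧ x - (x-1/2)/((j:ℝ)+2) < 1 := by
        intro j
        have hj : (0:ℝ) < (j:ℝ)+2 := by positivity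
        have h2 : (2:ℝ) ≤ (j:ℝ)+2 := by
          have : (0:ℝ) ≤ j := Nat.cast_nonneg j
          linarith
        have hd : 0 < (x-1/2)/((j:ℝ)+2) := div_pos (by linarith) hj
        have : (x-1/2)/((j:ℝ)+2) ≤ (x-1/2)/2 :=
          div_le_div_of_nonneg_left (by linarith) (by norm_num) h2
        exact ⟨by linarith, by linarith⟩
      have hseq : Filter.Tendsto (fun j : ℕ => 1/(2*(x - (x-1/2)/((j:ℝ)+2)))) Filter.atTop
          (nhds (1/(2*x))) :=
        tendsto_inv_shift_seq (by linarith) (fun j => by linarith [(hubound j).1])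
      refine ge_of_tendsto hseq (Filter.Eventually.of_forall fun j => ?_)
      calc (μ {ω | x ≤ ⨆ t, p t ω}).toReal
          ≤ (μ {ω | x - (x-1/2)/((j:ℝ)+2) < ⨆ t, p t ω}).toReal := by
            apply hmono_meas
            intro ω hω
            simp only [mem_setOf_eq] at hω ⊢
            have hd : 0 < (x-1/2)/((j:ℝ)+2) := by
              have hj : (0:ℝ) < (j:ℝ)+2 := by positivity
              exact div_pos (by linarith) hj
            linarith
        _ ≤ 1/(2*(x - (x-1/2)/((j:ℝ)+2))) := hub _ (hubound j).1 (hubound j).2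
    · exact hlb x hx hx1

lemma cdf_sup (hx : 1/2 < x) (hx1 : x < 1) :
    (μ {ω | (⨆ t, p t ω) ≤ x}).toReal = 1 - 1/(2*x) := by
  have hm : MeasurableSet {ω | (⨆ t, p t ω) ≤ x} :=
    measurableSet_le (measurable_supP hmart hcont hbdd) measurable_const
  have hcompl : {ω | (⨆ t, p t ω) ≤ x}ᶜ = {ω | x < ⨆ t, p t ω} := by
    ext ω
    simp [not_le]
  have h1 := prob_compl_eq_one_sub (μ := μ) hm
  rw [hcompl] at h1
  have h2 : (μ {ω | x < ⨆ t, p t ω}).toReal = 1/(2*x) :=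
    (sup_dist hmart hcont hbdd hp0 hterm01 hx hx1).1
  have h3 : μ {ω | x < ⨆ t, p t ω} ≤ 1 := prob_le_one
  calc (μ {ω | (⨆ t, p t ω) ≤ x}).toReal
      = (1 - μ {ω | x < ⨆ t, p t ω}).toReal := by
        rw [h1, ENNReal.sub_sub_cancel ENNReal.one_ne_top prob_le_one]
    _ = 1 - 1/(2*x) := by
        rw [ENNReal.toReal_sub_of_le h3 ENNReal.one_ne_top, h2, ENNReal.toReal_one]

end Derive
section Final

/-- measurable version of the eventual-loser maximum -/
def MM (p : unitInterval → Ω → ℝ) (ω : Ω) : ℝ :=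
  if p 1 ω = 0 then ⨆ t, p t ω else ⨆ t, (1 - p t ω)

variable {m0 : MeasurableSpace Ω} {μ : Measure Ω} [IsProbabilityMeasure μ]
  {ℱ : Filtration unitInterval m0}

variable (hmart : Martingale p ℱ μ) (hcont : ∀ ω, Continuous fun t => p t ω)
  (hbdd : ∀ t ω, p t ω ∈ Icc (0:ℝ) 1) (hp0 : ∀ ω, p 0 ω = 1/2)
  (hterm01 : ∀ᵐ ω ∂μ, p 1 ω = 0 ∨ p 1 ω = 1)

omit hmart hcont hbdd hp0 hterm01 in
lemma hmartq (hmart : Martingale p ℱ μ) : Martingale (fun t ω => 1 - p t ω) ℱ μ := by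
  have h := (martingale_const ℱ μ (1:ℝ)).sub hmart
  exact h


omit hmart hcont hbdd hp0 hterm01 in
lemma tendsto_two_sub_inv (a b c : ℝ) (ha : a ≠ 0) :
    Filter.Tendsto (fun j : ℕ => c - 1/(a - b/((j:ℝ)+2))) Filter.atTop (nhds (c - 1/a)) := by
  have h1 := tendsto_shift_seq a b
  have hdiv := Filter.Tendsto.div
    (tendsto_const_nhds (x := (1:ℝ)) : Filter.Tendsto (fun _ : ℕ => (1:ℝ)) Filter.atTop (nhds 1))
    h1 ha
  have h2 : Filter.Tendsto (fun j : ℕ => 1/(a - b/((j:ℝ)+2))) Filter.atTop (nhds (1/a)) := hdiv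
  exact ((tendsto_const_nhds : Filter.Tendsto (fun _ : ℕ => c) Filter.atTop (nhds c)).sub h2)

include hmart hcont hbdd hp0 hterm01

lemma cdfP : ∀ y : ℝ, 1/2 < y → y < 1 →
    (μ {ω | (⨆ t, p t ω) ≤ y}).toReal = 1 - 1/(2*y) :=
  fun y hy hy1 => cdf_sup hmart hcont hbdd hp0 hterm01 hy hy1

lemma cdfQ : ∀ y : ℝ, 1/2 < y → y < 1 →
    (μ {ω | (⨆ t, (1 - p t ω)) ≤ y}).toReal = 1 - 1/(2*y) := by
  intro y hy hy1
  exact cdf_sup (hmartq hmart) (fun ω => continuous_const.sub (hcont ω))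
    (fun t ω => ⟨by linarith [(hbdd t ω).2], by linarith [(hbdd t ω).1]⟩)
    (fun ω => by rw [hp0 ω]; norm_num)
    (hterm01.mono fun ω h => by rcases h with h | h <;> simp [h])
    hy hy1

lemma meas_supP : Measurable (fun ω => ⨆ t, p t ω) :=
  measurable_supP hmart hcont hbdd

lemma meas_supQ : Measurable (fun ω => ⨆ t, (1 - p t ω)) :=
  measurable_supP (hmartq hmart) (fun ω => continuous_const.sub (hcont ω))
    (fun t ω => ⟨by linarith [(hbdd t ω).2], by linarith [(hbdd t ω).1]⟩)

lemma meas_MM : Measurable (MM p) := by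
  apply Measurable.ite
  · exact (meas_p hmart 1) (measurableSet_singleton 0)
  · exact meas_supP hmart hcont hbdd hp0 hterm01
  · exact meas_supQ hmart hcont hbdd hp0 hterm01

lemma supP_ge_half (ω : Ω) : 1/2 ≤ ⨆ t, p t ω := by
  have := le_ciSup (bddAbove_range_p hbdd ω) 0
  rw [hp0 ω] at this
  exact this

lemma supQ_ge_half (ω : Ω) : 1/2 ≤ ⨆ t, (1 - p t ω) := by
  have hb : BddAbove (Set.range fun t => 1 - p t ω) := by
    refine ⟨1, ?_⟩
    rintro r ⟨t, rfl⟩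
    show 1 - p t ω ≤ 1
    linarith [(hbdd t ω).1]
  have := le_ciSup hb 0
  rw [hp0 ω] at this
  linarith [this]

lemma supP_ge_end (ω : Ω) : p 1 ω ≤ ⨆ t, p t ω := le_ciSup (bddAbove_range_p hbdd ω) 1

lemma supQ_ge_end (ω : Ω) : 1 - p 1 ω ≤ ⨆ t, (1 - p t ω) := by
  have hb : BddAbove (Set.range fun t => 1 - p t ω) := by
    refine ⟨1, ?_⟩
    rintro r ⟨t, rfl⟩
    show 1 - p t ω ≤ 1
    linarith [(hbdd t ω).1]
  exact le_ciSup hb 1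

lemma MM_decomp {y : ℝ} (hy1 : y < 1) :
    μ {ω | MM p ω ≤ y} = μ {ω | (⨆ t, p t ω) ≤ y} + μ {ω | (⨆ t, (1 - p t ω)) ≤ y} := by
  have hsets : ({ω | MM p ω ≤ y} : Set Ω) =ᵐ[μ]
      (({ω | (⨆ t, p t ω) ≤ y} ∪ {ω | (⨆ t, (1 - p t ω)) ≤ y} : Set Ω)) := by
    rw [Filter.eventuallyEq_set]
    filter_upwards [hterm01] with ω h01
    simp only [mem_setOf_eq, mem_union]
    rcases h01 with h0 | h1
    · rw [MM, if_pos h0]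
      constructor
      · exact Or.inl
      · rintro (h | h)
        · exact h
        · exfalso
          have := supQ_ge_end hmart hcont hbdd hp0 hterm01 ω
          rw [h0] at this
          simp only [sub_zero] at this
          linarith
    · rw [MM, if_neg (by rw [h1]; norm_num)]
      constructor
      · exact Or.inr
      · rintro (h | h)
        · exfalso
          have := supP_ge_end hmart hcont hbdd hp0 hterm01 ω
          rw [h1] at this
          linarith
        · exact h
  have hdisj : AEDisjoint μ {ω | (⨆ t, p t ω) ≤ y} {ω | (⨆ t, (1 - p t ω)) ≤ y} := by
    apply measure_eq_zero_iff_ae_notMem.mpr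
    filter_upwards [hterm01] with ω h01
    rintro ⟨hP, hQ⟩
    simp only [mem_setOf_eq] at hP hQ
    rcases h01 with h0 | h1
    · have := supQ_ge_end hmart hcont hbdd hp0 hterm01 ω
      rw [h0] at this
      simp only [sub_zero] at this
      linarith
    · have := supP_ge_end hmart hcont hbdd hp0 hterm01 ω
      rw [h1] at this
      linarith
  rw [measure_congr hsets]
  exact measure_union₀
    ((measurableSet_le (meas_supQ hmart hcont hbdd hp0 hterm01) measurable_const).nullMeasurableSet)
    hdisj

lemma MM_cdf {y : ℝ} (hy : 1/2 < y) (hy1 : y < 1) :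
    (μ {ω | MM p ω ≤ y}).toReal = 2 - 1/y := by
  rw [MM_decomp hmart hcont hbdd hp0 hterm01 hy1,
    ENNReal.toReal_add (measure_ne_top μ _) (measure_ne_top μ _),
    cdfP hmart hcont hbdd hp0 hterm01 y hy hy1,
    cdfQ hmart hcont hbdd hp0 hterm01 y hy hy1]
  have : y ≠ 0 := by linarith
  field_simp
  ring

lemma MM_cdf_all {y : ℝ} (hy : 1/2 ≤ y) (hy1 : y < 1) :
    (μ {ω | MM p ω ≤ y}).toReal = 2 - 1/y := by
  rcases lt_or_eq_of_le hy with hlt | heq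
  · exact MM_cdf hmart hcont hbdd hp0 hterm01 hlt hy1
  · -- y = 1/2
    rw [← heq]
    have hzero : (2:ℝ) - 1/(1/2 : ℝ) = 0 := by norm_num
    rw [hzero]
    -- approach from above
    have hu : ∀ j : ℕ, 1/2 < 1/2 + (1/4)/((j:ℝ)+2) ∧ 1/2 + (1/4)/((j:ℝ)+2) < 1 := by
      intro j
      have hj : (0:ℝ) < (j:ℝ)+2 := by positivity
      have h2 : (2:ℝ) ≤ (j:ℝ)+2 := by
        have : (0:ℝ) ≤ j := Nat.cast_nonneg j
        linarith
      have hd : 0 < (1/4:ℝ)/((j:ℝ)+2) := by positivity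
      have : (1/4:ℝ)/((j:ℝ)+2) ≤ (1/4)/2 :=
        div_le_div_of_nonneg_left (by norm_num) (by norm_num) h2
      exact ⟨by linarith, by linarith⟩
    have htend : Filter.Tendsto (fun j : ℕ => 2 - 1/(1/2 + (1/4)/((j:ℝ)+2))) Filter.atTop
        (nhds 0) := by
      have hT := tendsto_two_sub_inv (1/2 : ℝ) (-(1/4)) 2 (by norm_num)
      rw [show (2:ℝ) - 1/(1/2) = 0 from by norm_num] at hT
      exact hT.congr fun j => by ring
    have hle : ∀ j : ℕ, (μ {ω | MM p ω ≤ (1/2:ℝ)}).toReal ≤ 2 - 1/(1/2 + (1/4)/((j:ℝ)+2)) := by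
      intro j
      rw [← MM_cdf hmart hcont hbdd hp0 hterm01 (hu j).1 (hu j).2]
      apply ENNReal.toReal_mono (measure_ne_top μ _)
      apply measure_mono
      intro ω hω
      simp only [mem_setOf_eq] at hω ⊢
      have hd : 0 < (1/4:ℝ)/((j:ℝ)+2) := by positivity
      linarith
    have h0le := ge_of_tendsto htend (Filter.Eventually.of_forall hle)
    exact le_antisymm h0le ENNReal.toReal_nonneg

lemma MM_lt_half {y : ℝ} (hy : y < 1/2) : (μ {ω | MM p ω ≤ y}).toReal = 0 := by
  have : {ω | MM p ω ≤ y} = ∅ := by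
    ext ω
    simp only [mem_setOf_eq, mem_empty_iff_false, iff_false, not_le]
    have : 1/2 ≤ MM p ω := by
      rw [MM]
      split_ifs
      · exact supP_ge_half hmart hcont hbdd hp0 hterm01 ω
      · exact supQ_ge_half hmart hcont hbdd hp0 hterm01 ω
    linarith
  rw [this]
  simp

lemma MM_eq_one : (μ {ω | MM p ω = 1}).toReal = 0 := by
  have hw : ∀ j : ℕ, 1/2 < 1 - (1/4)/((j:ℝ)+2) ∧ 1 - (1/4)/((j:ℝ)+2) < 1 := by
    intro j
    have hj : (0:ℝ) < (j:ℝ)+2 := by positivity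
    have h2 : (2:ℝ) ≤ (j:ℝ)+2 := by
      have : (0:ℝ) ≤ j := Nat.cast_nonneg j
      linarith
    have hd : 0 < (1/4:ℝ)/((j:ℝ)+2) := by positivity
    have : (1/4:ℝ)/((j:ℝ)+2) ≤ (1/4)/2 :=
      div_le_div_of_nonneg_left (by norm_num) (by norm_num) h2
    exact ⟨by linarith, by linarith⟩
  have htend : Filter.Tendsto (fun j : ℕ => 1/(1 - (1/4)/((j:ℝ)+2)) - 1) Filter.atTop
      (nhds 0) := by
    have hT := (tendsto_two_sub_inv (1:ℝ) (1/4) 1 (by norm_num)).neg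
    rw [show -((1:ℝ) - 1/1) = 0 from by norm_num] at hT
    exact hT.congr fun j => by ring
  have hle : ∀ j : ℕ, (μ {ω | MM p ω = 1}).toReal ≤ 1/(1 - (1/4)/((j:ℝ)+2)) - 1 := by
    intro j
    set y := 1 - (1/4)/((j:ℝ)+2) with hy
    have hmy : MeasurableSet {ω | MM p ω ≤ y} :=
      measurableSet_le (meas_MM hmart hcont hbdd hp0 hterm01) measurable_const
    have hsub : {ω | MM p ω = 1} ⊆ {ω | MM p ω ≤ y}ᶜ := by
      intro ω hω
      simp only [mem_setOf_eq] at hω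
      simp only [mem_compl_iff, mem_setOf_eq, not_le, hω]
      exact (hw j).2
    have h1 : μ {ω | MM p ω = 1} ≤ μ ({ω | MM p ω ≤ y}ᶜ) := measure_mono hsub
    have h2 : μ ({ω | MM p ω ≤ y}ᶜ) = 1 - μ {ω | MM p ω ≤ y} := prob_compl_eq_one_sub hmy
    have h3 : (μ ({ω | MM p ω ≤ y}ᶜ)).toReal = 1 - (2 - 1/y) := by
      rw [h2, ENNReal.toReal_sub_of_le prob_le_one ENNReal.one_ne_top, ENNReal.toReal_one,
        MM_cdf hmart hcont hbdd hp0 hterm01 (hw j).1 (hw j).2]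
    calc (μ {ω | MM p ω = 1}).toReal
        ≤ (μ ({ω | MM p ω ≤ y}ᶜ)).toReal := ENNReal.toReal_mono (measure_ne_top μ _) h1
      _ = 1 - (2 - 1/y) := h3
      _ = 1/y - 1 := by ring
  have h0le := ge_of_tendsto htend (Filter.Eventually.of_forall hle)
  exact le_antisymm h0le ENNReal.toReal_nonneg

lemma MM_tail : (μ {ω | (2/3 : ℝ) ≤ MM p ω}).toReal = 1/2 := by
  -- first compute μ {MM < 2/3}
  have hu : ∀ j : ℕ, 1/2 < 2/3 - (1/6)/((j:ℝ)+2) ∧ 2/3 - (1/6)/((j:ℝ)+2) < 1 := by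
    intro j
    have hj : (0:ℝ) < (j:ℝ)+2 := by positivity
    have h2 : (2:ℝ) ≤ (j:ℝ)+2 := by
      have : (0:ℝ) ≤ j := Nat.cast_nonneg j
      linarith
    have hd : 0 < (1/6:ℝ)/((j:ℝ)+2) := by positivity
    have : (1/6:ℝ)/((j:ℝ)+2) ≤ (1/6)/2 :=
      div_le_div_of_nonneg_left (by norm_num) (by norm_num) h2
    exact ⟨by linarith, by linarith⟩
  have humono : Monotone (fun j : ℕ => {ω | MM p ω ≤ 2/3 - (1/6)/((j:ℝ)+2)}) := by
    intro a b hab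
    intro ω hω
    simp only [mem_setOf_eq] at hω ⊢
    have : (1/6:ℝ)/((b:ℝ)+2) ≤ (1/6)/((a:ℝ)+2) := by
      apply div_le_div_of_nonneg_left (by norm_num) (by positivity)
      have : (a:ℝ) ≤ b := Nat.cast_le.mpr hab
      linarith
    linarith
  have hU : (⋃ j : ℕ, {ω | MM p ω ≤ 2/3 - (1/6)/((j:ℝ)+2)}) = {ω | MM p ω < 2/3} := by
    ext ω
    simp only [mem_iUnion, mem_setOf_eq]
    constructor
    · rintro ⟨j, hj⟩
      have hd : 0 < (1/6:ℝ)/((j:ℝ)+2) := by positivity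
      linarith
    · intro h
      have h1 := tendsto_shift_seq (2/3 : ℝ) (1/6)
      have := h1.eventually (eventually_gt_nhds h)
      obtain ⟨j, hj⟩ := this.exists
      exact ⟨j, le_of_lt hj⟩
  have htendμ := tendsto_measure_iUnion_atTop (μ := μ) humono
  rw [hU] at htendμ
  have htstr : Filter.Tendsto
      (fun j : ℕ => (μ {ω | MM p ω ≤ 2/3 - (1/6)/((j:ℝ)+2)}).toReal) Filter.atTop
      (nhds ((μ {ω | MM p ω < 2/3}).toReal)) :=
    (ENNReal.tendsto_toReal (measure_ne_top μ _)).comp htendμ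
  have hvals : ∀ j : ℕ, (μ {ω | MM p ω ≤ 2/3 - (1/6)/((j:ℝ)+2)}).toReal
      = 2 - 1/(2/3 - (1/6)/((j:ℝ)+2)) :=
    fun j => MM_cdf hmart hcont hbdd hp0 hterm01 (hu j).1 (hu j).2
  simp_rw [hvals] at htstr
  have htval : Filter.Tendsto (fun j : ℕ => 2 - 1/(2/3 - (1/6)/((j:ℝ)+2))) Filter.atTop
      (nhds (1/2)) := by
    have hT := tendsto_two_sub_inv (2/3 : ℝ) (1/6) 2 (by norm_num)
    rw [show (2:ℝ) - 1/(2/3) = 1/2 from by norm_num] at hT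
    exact hT
  have hlt : (μ {ω | MM p ω < 2/3}).toReal = 1/2 := tendsto_nhds_unique htstr htval
  -- complement
  have hmlt : MeasurableSet {ω | MM p ω < (2/3 : ℝ)} :=
    measurableSet_lt (meas_MM hmart hcont hbdd hp0 hterm01) measurable_const
  have hcompl : {ω | MM p ω < (2/3:ℝ)}ᶜ = {ω | (2/3:ℝ) ≤ MM p ω} := by
    ext ω
    simp [not_lt]
  have h2 := prob_compl_eq_one_sub (μ := μ) hmlt
  rw [hcompl] at h2
  rw [h2, ENNReal.toReal_sub_of_le prob_le_one ENNReal.one_ne_top, ENNReal.toReal_one, hlt]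
  norm_num

end Final
end EL
theorem stmt_10 {Ω : Type*} {m0 : MeasurableSpace Ω} {μ : Measure Ω}
    [IsProbabilityMeasure μ]
    {ℱ : Filtration unitInterval m0} {p : unitInterval → Ω → ℝ} {Y : Ω → ℝ} 
    (hmart : Martingale p ℱ μ)
    (hcont : ∀ ω, Continuous fun t => p t ω)
    (hbdd : ∀ t ω, p t ω ∈ Set.Icc (0:ℝ) 1)
    (hp0 : ∀ ω, p 0 ω = (1/2 : ℝ))
    (hY : ∀ᵐ ω ∂μ, Y ω = 0 ∨ Y ω = 1)
    (hterm : ∀ᵐ ω ∂μ, p 1 ω = Y ω)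
    (hprior : (μ {ω | Y ω = 1}).toReal = (1/2 : ℝ)) :
    (∀ x : ℝ, 1/2 ≤ x → x < 1 →
      (μ {ω | (fun ω => if Y ω = 0 then ⨆ t, p t ω else ⨆ t, (1 - p t ω)) ω ≤ x}).toReal = 2 - 1 / x) ∧
    (∀ x : ℝ, x < 1/2 →
      (μ {ω | (fun ω => if Y ω = 0 then ⨆ t, p t ω else ⨆ t, (1 - p t ω)) ω ≤ x}).toReal = 0) ∧
    (μ {ω | (fun ω => if Y ω = 0 then ⨆ t, p t ω else ⨆ t, (1 - p t ω)) ω = 1}).toReal = 0 ∧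
    (μ {ω | (2/3 : ℝ) ≤ (fun ω => if Y ω = 0 then ⨆ t, p t ω else ⨆ t, (1 - p t ω)) ω}).toReal = 1/2 := by
  have hterm01 : ∀ᵐ ω ∂μ, p 1 ω = 0 ∨ p 1 ω = 1 := by
    filter_upwards [hY, hterm] with ω h1 h2
    rw [h2]
    exact h1
  have hMae : ∀ᵐ ω ∂μ,
      (if Y ω = 0 then ⨆ t, p t ω else ⨆ t, (1 - p t ω)) = MM p ω := by
    filter_upwards [hterm] with ω h
    show _ = if p 1 ω = 0 then ⨆ t, p t ω else ⨆ t, (1 - p t ω)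
    rw [h]
  have hcongr : ∀ (P : ℝ → Prop),
      μ {ω | P ((fun ω => if Y ω = 0 then ⨆ t, p t ω else ⨆ t, (1 - p t ω)) ω)}
        = μ {ω | P (MM p ω)} := by
    intro P
    apply measure_congr
    rw [Filter.eventuallyEq_set]
    filter_upwards [hMae] with ω h
    exact iff_of_eq (congrArg P h)
  refine ⟨?_, ?_, ?_, ?_⟩
  · intro x hx hx1
    rw [hcongr (fun r => r ≤ x)]
    exact MM_cdf_all hmart hcont hbdd hp0 hterm01 hx hx1
  · intro x hx
    rw [hcongr (fun r => r ≤ x)]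
    exact MM_lt_half hmart hcont hbdd hp0 hterm01 hx
  · rw [hcongr (fun r => r = 1)]
    exact MM_eq_one hmart hcont hbdd hp0 hterm01
  · rw [hcongr (fun r => (2/3:ℝ) ≤ r)]
    exact MM_tail hmart hcont hbdd hp0 hterm01
end

section
/- Let (p_t)_{t∈[0,1]} be a continuous-path [0,1]-valued martingale with p_0 ∈ (0,1) and p_1 = Y ∈ {0,1} a.s. Let m = inf_{0≤t≤1} p_t. Then for every x ∈ [0, p_0), P(m ≤ x | Y = 1) = ((1−p_0)/p_0) · (x/(1−x)). -/
open MeasureTheory ProbabilityTheory unitInterval Filter Topology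

namespace Stmt11Aux

/-- dyadic grid point `k/2^n` clipped to `[0,1]`. -/
noncomputable def tg (n k : ℕ) : unitInterval :=
  ⟨min ((k : ℝ) / 2 ^ n) 1, ⟨le_min (by positivity) zero_le_one, min_le_right _ _⟩⟩

lemma tg_mono (n : ℕ) : Monotone (tg n) := by
  intro i j hij
  simp only [tg, Subtype.mk_le_mk]
  exact min_le_min (div_le_div_of_nonneg_right (show (i:ℝ) ≤ j by exact_mod_cast hij) (by positivity)) le_rfl

lemma tg_zero (n : ℕ) : tg n 0 = 0 := by
  simp [tg, Subtype.ext_iff]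

lemma tg_last {n k : ℕ} (h : 2 ^ n ≤ k) : tg n k = 1 := by
  simp only [tg, Subtype.ext_iff]
  have : (1 : ℝ) ≤ (k : ℝ) / 2 ^ n := by
    rw [le_div_iff₀ (by positivity)]
    simpa using by exact_mod_cast h
  simp [min_eq_right this, Set.Icc.coe_one]

lemma abs_min_sub_min_le (a b c : ℝ) : |min a c - min b c| ≤ |a - b| := by
  rcases le_total a b with h | h <;> rcases le_total a c with h1 | h1 <;>
    rcases le_total b c with h2 | h2 <;>
    simp [min_eq_left, min_eq_right, h1, h2, abs_le] <;> constructor <;> linarith [abs_nonneg (a-b), le_abs_self (a-b), neg_abs_le (a-b)]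

lemma dist_tg (n k : ℕ) : dist (tg n (k+1)) (tg n k) ≤ ((2:ℝ) ^ n)⁻¹ := by
  rw [Subtype.dist_eq]
  have := abs_min_sub_min_le (((k:ℝ)+1) / 2 ^ n) ((k:ℝ) / 2 ^ n) 1
  simp only [tg]
  push_cast
  refine le_trans this ?_
  have heq : ((k:ℝ)+1)/2^n - (k:ℝ)/2^n = ((2:ℝ)^n)⁻¹ := by field_simp; ring
  rw [heq, abs_of_nonneg (show (0:ℝ) ≤ ((2:ℝ)^n)⁻¹ by positivity)]

lemma tg_near (t : unitInterval) (n : ℕ) :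
    ∃ k ≤ 2 ^ n, dist (tg n k) t ≤ ((2:ℝ) ^ n)⁻¹ := by
  set y : ℝ := (t : ℝ) * 2 ^ n with hy
  have hy0 : 0 ≤ y := mul_nonneg t.2.1 (by positivity)
  refine ⟨⌊y⌋₊, ?_, ?_⟩
  · have : y ≤ 2 ^ n := by
      rw [hy]
      calc (t:ℝ) * 2 ^ n ≤ 1 * 2 ^ n := by gcongr; exact t.2.2
      _ = 2 ^ n := one_mul _
    calc ⌊y⌋₊ ≤ ⌊(2:ℝ)^n⌋₊ := Nat.floor_le_floor this
    _ = 2 ^ n := by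
        rw [show ((2:ℝ)^n) = ((2^n : ℕ) : ℝ) by push_cast; ring, Nat.floor_natCast]
  · have h1 : (⌊y⌋₊ : ℝ) ≤ y := Nat.floor_le hy0
    have h2 : y < ⌊y⌋₊ + 1 := Nat.lt_floor_add_one y
    have hle : (⌊y⌋₊ : ℝ) / 2 ^ n ≤ 1 := by
      rw [div_le_one (by positivity)]
      calc (⌊y⌋₊ : ℝ) ≤ y := h1
      _ ≤ 1 * 2 ^ n := by rw [hy]; gcongr; exact t.2.2
      _ = 2 ^ n := one_mul _
    have hA : (⌊y⌋₊ : ℝ) / 2 ^ n ≤ (t : ℝ) := by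
      rw [div_le_iff₀ (by positivity)]
      simpa [hy, mul_comm] using h1
    have hB : (t : ℝ) ≤ ((⌊y⌋₊ : ℝ) + 1) / 2 ^ n := by
      rw [le_div_iff₀ (by positivity)]
      calc (t:ℝ) * 2 ^ n = y := by rw [hy]
      _ ≤ ⌊y⌋₊ + 1 := h2.le
    have hC : ((⌊y⌋₊ : ℝ) + 1) / 2 ^ n = (⌊y⌋₊ : ℝ) / 2 ^ n + ((2:ℝ)^n)⁻¹ := by
      rw [add_div, one_div]
    rw [Subtype.dist_eq]
    simp only [tg, min_eq_left hle]
    rw [Real.dist_eq, abs_le]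
    constructor <;> linarith


section Main

variable {Ω : Type*} {m0 : MeasurableSpace Ω} {μ : Measure Ω} [IsProbabilityMeasure μ]
  {ℱ : Filtration unitInterval m0} {p : unitInterval → Ω → ℝ} {p₀ : ℝ}

/-- The event that the sampled process dips below `c` on the dyadic grid of mesh `2^{-n}`. -/
def Bset (p : unitInterval → Ω → ℝ) (n : ℕ) (c : ℝ) : Set Ω :=
  {ω | ∃ k, k ≤ 2 ^ n ∧ p (tg n k) ω ≤ c}

/-- Maximal increment of the sampled process over the dyadic grid. -/
noncomputable def Dfun (p : unitInterval → Ω → ℝ) (n : ℕ) (ω : Ω) : ℝ :=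
  (Finset.range (2 ^ n)).sup' (Finset.nonempty_range_iff.2 (by positivity))
    fun k => |p (tg n (k+1)) ω - p (tg n k) ω|

lemma pmeas (hmart : Martingale p ℱ μ) (t : unitInterval) : Measurable (p t) :=
  ((hmart.stronglyMeasurable t).mono (ℱ.le t)).measurable

lemma measurableSet_Bset (hmart : Martingale p ℱ μ) (n : ℕ) (c : ℝ) :
    MeasurableSet (Bset p n c) := by
  have : Bset p n c = ⋃ (k : ℕ) (_ : k ≤ 2 ^ n), {ω | p (tg n k) ω ≤ c} := by
    ext ω; simp [Bset, Set.mem_iUnion]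
  rw [this]
  exact MeasurableSet.iUnion fun k => MeasurableSet.iUnion fun _ =>
    measurableSet_le (pmeas hmart _) measurable_const

lemma Dfun_nonneg (n : ℕ) (ω : Ω) : 0 ≤ Dfun p n ω := by
  have h0 : (0:ℕ) ∈ Finset.range (2 ^ n) :=
    Finset.mem_range.2 (Nat.pow_pos (by norm_num))
  refine le_trans (abs_nonneg (p (tg n (0+1)) ω - p (tg n 0) ω)) ?_
  exact Finset.le_sup' (fun k => |p (tg n (k+1)) ω - p (tg n k) ω|) h0

lemma Dfun_le_one (hbdd : ∀ t ω, p t ω ∈ Set.Icc (0:ℝ) 1) (n : ℕ) (ω : Ω) :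
    Dfun p n ω ≤ 1 := by
  refine Finset.sup'_le _ _ fun k _ => ?_
  rw [abs_le]
  constructor <;> nlinarith [(hbdd (tg n (k+1)) ω).1, (hbdd (tg n (k+1)) ω).2,
    (hbdd (tg n k) ω).1, (hbdd (tg n k) ω).2]

lemma Dfun_measurable (hmart : Martingale p ℱ μ) (n : ℕ) : Measurable (Dfun p n) := by
  have : Dfun p n = (Finset.range (2 ^ n)).sup'
      (Finset.nonempty_range_iff.2 (by positivity))
      (fun k => fun ω => |p (tg n (k+1)) ω - p (tg n k) ω|) := by
    funext ω
    rw [Finset.sup'_apply]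
    rfl
  rw [this]
  exact Finset.measurable_sup' _ fun k _ => ((pmeas hmart _).sub (pmeas hmart _)).abs

lemma Dfun_integrable (hmart : Martingale p ℱ μ) (hbdd : ∀ t ω, p t ω ∈ Set.Icc (0:ℝ) 1)
    (n : ℕ) : Integrable (Dfun p n) μ := by
  refine ⟨(Dfun_measurable hmart n).aestronglyMeasurable, ?_⟩
  refine HasFiniteIntegral.of_bounded (C := 1) (ae_of_all _ fun ω => ?_)
  rw [Real.norm_eq_abs, abs_of_nonneg (Dfun_nonneg n ω)]
  exact Dfun_le_one hbdd n ω


lemma os_est (hmart : Martingale p ℱ μ) (hbdd : ∀ t ω, p t ω ∈ Set.Icc (0:ℝ) 1)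
    (hp0 : ∀ ω, p 0 ω = p₀) {c : ℝ} (hc : c < p₀) (n : ℕ) :
    |(∫ ω in Bset p n c, p 1 ω ∂μ) - c * (μ (Bset p n c)).toReal|
      ≤ ∫ ω, Dfun p n ω ∂μ := by
  classical
  set N := 2 ^ n with hN
  have hNpos : 0 < N := Nat.pow_pos (by norm_num)
  set 𝒢 : Filtration ℕ m0 :=
    ⟨fun k => ℱ (tg n k), fun i j hij => ℱ.mono (tg_mono n hij), fun k => ℱ.le _⟩ with h𝒢
  set q : ℕ → Ω → ℝ := fun k => p (tg n k) with hq_def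
  have hq : Martingale q 𝒢 μ :=
    ⟨fun k => hmart.stronglyAdapted _, fun i j hij => hmart.2 _ _ (tg_mono n hij)⟩
  set τ : Ω → ℕ := hittingBtwn q (Set.Iic c) 0 N with hτ_def
  set τw : Ω → WithTop ℕ := fun ω => (τ ω : WithTop ℕ) with hτw_def
  have hsv : ∀ ω, stoppedValue q τw ω = q (τ ω) ω := fun ω => rfl
  have hτ : IsStoppingTime 𝒢 τw :=
    Adapted.isStoppingTime_hittingBtwn hq.stronglyAdapted.adapted measurableSet_Iic
  have hτle : ∀ ω, τ ω ≤ N := fun ω => hittingBtwn_le ω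
  have hτwle : ∀ ω, τw ω ≤ N := fun ω => WithTop.coe_le_coe.2 (hτle ω)
  set B : Set Ω := Bset p n c with hB_def
  have hBmeas : MeasurableSet B := measurableSet_Bset hmart n c
  have hqN : q N = p 1 := by
    simp only [hq_def]
    rw [show tg n N = 1 from tg_last hN.ge]
  -- equality of expectations by optional stopping
  have heq : μ[stoppedValue q τw] = μ[q N] := by
    have h1 : μ[stoppedValue q τw] ≤ μ[stoppedValue q (fun _ => N)] :=
      hq.submartingale.expected_stoppedValue_mono hτ (isStoppingTime_const 𝒢 N)
        hτwle (fun ω => le_rfl)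
    have h2 : μ[stoppedValue (fun k => -q k) τw]
        ≤ μ[stoppedValue (fun k => -q k) (fun _ => N)] :=
      hq.neg.submartingale.expected_stoppedValue_mono hτ (isStoppingTime_const 𝒢 N)
        hτwle (fun ω => le_rfl)
    have e1 : stoppedValue (fun k => -q k) τw = fun ω => -(stoppedValue q τw ω) := rfl
    have e2 : stoppedValue (fun k => -q k) (fun _ => N)
        = fun ω => -(stoppedValue q (fun _ => N) ω) := rfl
    rw [e1, e2, integral_neg, integral_neg, neg_le_neg_iff] at h2
    change _ ≤ μ[q N] at h1; change μ[q N] ≤ _ at h2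
    exact le_antisymm h1 h2
  -- existence of hits on B
  have hBex : ∀ ω ∈ B, ∃ j ∈ Set.Icc 0 N, q j ω ∈ Set.Iic c := by
    rintro ω ⟨k, hk, hkc⟩
    exact ⟨k, ⟨Nat.zero_le _, hk⟩, hkc⟩
  -- value at stopping time is ≤ c on B
  have hupper : ∀ ω ∈ B, stoppedValue q τw ω ≤ c := fun ω hω =>
    stoppedValue_hittingBtwn_mem (hBex ω hω)
  -- τ is positive on B
  have hτpos : ∀ ω ∈ B, 1 ≤ τ ω := by
    intro ω hω
    by_contra h
    push_neg at h
    have h' : τ ω = 0 := by omega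
    have hv : stoppedValue q τw ω = q 0 ω := by rw [hsv, h']
    have hP : q 0 ω = p₀ := by
      simp only [hq_def]
      rw [show tg n 0 = 0 from tg_zero n]
      exact hp0 ω
    have := hupper ω hω
    rw [hv, hP] at this
    exact absurd (lt_of_lt_of_le hc this) (lt_irrefl _)
  -- lower bound on the stopped value on B
  have hlower : ∀ ω ∈ B, c - Dfun p n ω ≤ stoppedValue q τw ω := by
    intro ω hω
    have h1 : τ ω - 1 < τ ω := Nat.sub_lt (hτpos ω hω) one_pos
    have hnm : q (τ ω - 1) ω ∉ Set.Iic c := notMem_of_lt_hittingBtwn h1 (Nat.zero_le _)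
    rw [Set.mem_Iic, not_le] at hnm
    have hsucc : τ ω - 1 + 1 = τ ω := Nat.succ_pred_eq_of_pos (hτpos ω hω)
    have hmem : τ ω - 1 ∈ Finset.range N := by
      have h2 := hτle ω
      have h3 := hτpos ω hω
      rw [Finset.mem_range]
      omega
    have hD : |q (τ ω - 1 + 1) ω - q (τ ω - 1) ω| ≤ Dfun p n ω :=
      Finset.le_sup' (fun k => |p (tg n (k+1)) ω - p (tg n k) ω|) hmem
    rw [hsucc] at hD
    have := neg_abs_le (q (τ ω) ω - q (τ ω - 1) ω)
    rw [abs_sub_comm] at hD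
    have h2 : q (τ ω - 1) ω - q (τ ω) ω ≤ Dfun p n ω :=
      le_trans (le_abs_self _) hD
    rw [hsv]
    linarith
  -- integrability
  have hDint : Integrable (Dfun p n) μ := Dfun_integrable hmart hbdd n
  have hsvint : Integrable (stoppedValue q τw) μ :=
    hq.submartingale.integrable_stoppedValue hτ hτwle
  have hqNint : Integrable (q N) μ := hq.integrable N
  -- τ = N off B, hence stoppedValue = q N off B
  have hoffB : ∀ ω ∉ B, stoppedValue q τw ω = q N ω := by
    intro ω hω
    have hno : ¬∃ j ∈ Set.Icc 0 N, q j ω ∈ Set.Iic c := by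
      rintro ⟨j, hj, hjc⟩
      exact hω ⟨j, hj.2, hjc⟩
    have : τ ω = N := by
      rw [hτ_def, hittingBtwn]
      exact if_neg hno
    rw [hsv, this]
  -- set integral equality on B
  have hBint : ∫ ω in B, stoppedValue q τw ω ∂μ = ∫ ω in B, q N ω ∂μ := by
    have hsl : ∫ ω in B, stoppedValue q τw ω ∂μ + ∫ ω in Bᶜ, stoppedValue q τw ω ∂μ
        = μ[stoppedValue q τw] := integral_add_compl hBmeas hsvint
    have hsr : ∫ ω in B, q N ω ∂μ + ∫ ω in Bᶜ, q N ω ∂μ = μ[q N] :=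
      integral_add_compl hBmeas hqNint
    have hcomp : ∫ ω in Bᶜ, stoppedValue q τw ω ∂μ = ∫ ω in Bᶜ, q N ω ∂μ :=
      setIntegral_congr_fun hBmeas.compl fun ω hω => hoffB ω hω
    rw [hcomp] at hsl
    linarith [heq, hsl, hsr]
  -- bounds for the set integral
  have hμB : (μ B).toReal = ∫ ω in B, (1:ℝ) ∂μ := by
    rw [setIntegral_const, smul_eq_mul, mul_one, measureReal_def]
  have hub : ∫ ω in B, q N ω ∂μ ≤ c * (μ B).toReal := by
    rw [hBint.symm]
    calc ∫ ω in B, stoppedValue q τw ω ∂μ ≤ ∫ _ in B, c ∂μ := by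
          refine setIntegral_mono_on hsvint.integrableOn (integrableOn_const ?_) hBmeas hupper
          exact measure_ne_top μ B
    _ = c * (μ B).toReal := by rw [setIntegral_const, smul_eq_mul, mul_comm, measureReal_def]
  have hlb : c * (μ B).toReal - ∫ ω, Dfun p n ω ∂μ ≤ ∫ ω in B, q N ω ∂μ := by
    rw [hBint.symm]
    have h1 : ∫ ω in B, (c - Dfun p n ω) ∂μ ≤ ∫ ω in B, stoppedValue q τw ω ∂μ := by
      refine setIntegral_mono_on ?_ hsvint.integrableOn hBmeas hlower
      exact ((integrable_const c).sub hDint).integrableOn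
    have h2 : ∫ ω in B, (c - Dfun p n ω) ∂μ
        = c * (μ B).toReal - ∫ ω in B, Dfun p n ω ∂μ := by
      rw [integral_sub (integrable_const c).integrableOn hDint.integrableOn,
        setIntegral_const, smul_eq_mul, mul_comm, measureReal_def]
    have h3 : ∫ ω in B, Dfun p n ω ∂μ ≤ ∫ ω, Dfun p n ω ∂μ :=
      setIntegral_le_integral hDint (ae_of_all _ fun ω => Dfun_nonneg n ω)
    linarith
  rw [abs_le, ← hqN]
  constructor <;> linarith


lemma Dfun_tendsto (hcont : ∀ ω, Continuous fun t => p t ω) (ω : Ω) :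
    Filter.Tendsto (fun n => Dfun p n ω) atTop (𝓝 0) := by
  rw [Metric.tendsto_atTop]
  intro ε hε
  have hu : UniformContinuous fun t => p t ω :=
    CompactSpace.uniformContinuous_of_continuous (hcont ω)
  obtain ⟨δ, hδ, hδ'⟩ := Metric.uniformContinuous_iff.mp hu ε hε
  obtain ⟨M, hM⟩ : ∃ M : ℕ, ((2:ℝ) ^ M)⁻¹ < δ := by
    obtain ⟨M, hM⟩ := pow_unbounded_of_one_lt (R := ℝ) δ⁻¹ one_lt_two
    exact ⟨M, by rwa [inv_lt_comm₀ (by positivity) hδ]⟩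
  refine ⟨M, fun n hn => ?_⟩
  rw [Real.dist_eq, sub_zero, abs_of_nonneg (Dfun_nonneg n ω)]
  rw [Dfun, Finset.sup'_lt_iff]
  intro k _
  rw [← Real.dist_eq]
  refine hδ' ?_
  calc dist (tg n (k+1)) (tg n k) ≤ ((2:ℝ) ^ n)⁻¹ := dist_tg n k
  _ ≤ ((2:ℝ) ^ M)⁻¹ := by gcongr <;> norm_num
  _ < δ := hM

lemma int_Dfun_tendsto (hmart : Martingale p ℱ μ)
    (hbdd : ∀ t ω, p t ω ∈ Set.Icc (0:ℝ) 1) (hcont : ∀ ω, Continuous fun t => p t ω) :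
    Filter.Tendsto (fun n => ∫ ω, Dfun p n ω ∂μ) atTop (𝓝 0) := by
  have h := tendsto_integral_of_dominated_convergence (μ := μ)
    (F := fun n => Dfun p n) (f := fun _ => (0:ℝ)) (bound := fun _ => (1:ℝ))
    (fun n => (Dfun_measurable hmart n).aestronglyMeasurable)
    (integrable_const 1)
    (fun n => ae_of_all _ fun ω => by
      rw [Real.norm_eq_abs, abs_of_nonneg (Dfun_nonneg n ω)]
      exact Dfun_le_one hbdd n ω)
    (ae_of_all _ fun ω => Dfun_tendsto hcont ω)
  simpa using h

lemma inf_measurable (hmart : Martingale p ℱ μ) (hcont : ∀ ω, Continuous fun t => p t ω)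
    (hbdd : ∀ t ω, p t ω ∈ Set.Icc (0:ℝ) 1) :
    Measurable (fun ω => ⨅ t, p t ω) := by
  obtain ⟨s, hsc, hsd⟩ := TopologicalSpace.exists_countable_dense unitInterval
  haveI := hsc.to_subtype
  haveI : Nonempty s := hsd.nonempty.to_subtype
  have key : (fun ω => ⨅ t, p t ω) = fun ω => ⨅ d : s, p (d : unitInterval) ω := by
    funext ω
    have hbb : BddBelow (Set.range fun t => p t ω) :=
      ⟨0, by rintro y ⟨t, rfl⟩; exact (hbdd t ω).1⟩
    have hbb2 : BddBelow (Set.range fun d : s => p (d : unitInterval) ω) :=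
      ⟨0, by rintro y ⟨d, rfl⟩; exact (hbdd _ ω).1⟩
    apply le_antisymm
    · exact le_ciInf fun d => ciInf_le hbb (d : unitInterval)
    · refine le_ciInf fun t => ?_
      obtain ⟨u, hu_mem, hu_lim⟩ := mem_closure_iff_seq_limit.mp (hsd t)
      have hlim : Filter.Tendsto (fun i => p (u i) ω) atTop (𝓝 (p t ω)) :=
        ((hcont ω).tendsto t).comp hu_lim
      refine ge_of_tendsto hlim (Filter.Eventually.of_forall fun i => ?_)
      exact ciInf_le hbb2 ⟨u i, hu_mem i⟩
  rw [key]
  exact Measurable.iInf fun d => pmeas hmart _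


lemma bound_c (hmart : Martingale p ℱ μ) (hcont : ∀ ω, Continuous fun t => p t ω)
    (hbdd : ∀ t ω, p t ω ∈ Set.Icc (0:ℝ) 1) (hp0 : ∀ ω, p 0 ω = p₀)
    (hp0mem : p₀ ∈ Set.Ioo (0:ℝ) 1)
    (hterm' : ∀ᵐ ω ∂μ, p 1 ω = 0 ∨ p 1 ω = 1)
    (hE : μ {ω | p 1 ω = 1} = ENNReal.ofReal p₀)
    {x c : ℝ} (hx : 0 ≤ x) (hxc : x < c) (hc : c < p₀) :
    (μ ({ω | (⨅ t, p t ω) ≤ x} ∩ {ω | p 1 ω = 1})).toReal ≤ c * (1 - p₀) / (1 - c)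
    ∧ c * (1 - p₀) / (1 - c) ≤ (μ ({ω | (⨅ t, p t ω) ≤ c} ∩ {ω | p 1 ω = 1})).toReal := by
  have hc0 : 0 ≤ c := le_of_lt (lt_of_le_of_lt hx hxc)
  have hc1 : c < 1 := lt_trans hc hp0mem.2
  have hp₀1 : p₀ < 1 := hp0mem.2
  set E : Set Ω := {ω | p 1 ω = 1} with hE_def
  have hEmeas : MeasurableSet E := (pmeas hmart 1) (measurableSet_singleton 1)
  set a : ℕ → ℝ := fun n => (μ (Bset p n c ∩ E)).toReal with ha_def
  set L : ℝ := c * (1 - p₀) / (1 - c) with hL_def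
  -- Step A : ∫_B p 1 = a n
  have hind : p 1 =ᵐ[μ] E.indicator (fun _ => (1:ℝ)) := by
    filter_upwards [hterm'] with ω hω
    rcases hω with h | h
    · rw [h, Set.indicator_of_notMem]
      simp only [hE_def, Set.mem_setOf_eq, h]
      norm_num
    · rw [h, Set.indicator_of_mem]
      simpa [hE_def] using h
  have hstepA : ∀ n, ∫ ω in Bset p n c, p 1 ω ∂μ = a n := by
    intro n
    rw [integral_congr_ae (ae_restrict_of_ae hind), setIntegral_indicator hEmeas,
      setIntegral_const, smul_eq_mul, mul_one, measureReal_def]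
  -- Step B : measure splitting
  have hstepB : ∀ n, (μ (Bset p n c)).toReal = a n + (1 - p₀) := by
    intro n
    have hsplit : μ (Bset p n c ∩ E) + μ (Bset p n c \ E) = μ (Bset p n c) :=
      measure_inter_add_diff _ hEmeas
    have hdiff : μ (Bset p n c \ E) = ENNReal.ofReal (1 - p₀) := by
      have hae : (Bset p n c \ E : Set Ω) =ᵐ[μ] (Eᶜ : Set Ω) := by
        rw [Filter.eventuallyEq_set]
        filter_upwards [hterm'] with ω hω
        constructor
        · rintro ⟨-, h2⟩; exact h2
        · intro h2
          refine ⟨⟨2 ^ n, le_rfl, ?_⟩, h2⟩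
          rw [show tg n (2^n) = 1 from tg_last le_rfl]
          rcases hω with h | h
          · rw [h]; exact hc0
          · exact absurd h h2
      rw [measure_congr hae, measure_compl hEmeas (measure_ne_top μ E), hE, measure_univ,
        ← ENNReal.ofReal_one, ← ENNReal.ofReal_sub _ hp0mem.1.le]
    rw [← hsplit, hdiff, ENNReal.toReal_add (measure_ne_top μ _) (by simp),
      ENNReal.toReal_ofReal (by linarith)]
  -- Step C+D : a n converges to L
  have hA : Filter.Tendsto a atTop (𝓝 L) := by
    have hCn : ∀ n, |a n - c * (a n + (1 - p₀))| ≤ ∫ ω, Dfun p n ω ∂μ := by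
      intro n
      have := os_est hmart hbdd hp0 hc n
      rwa [hstepA n, hstepB n] at this
    have h0 : Filter.Tendsto (fun n => a n - c * (a n + (1 - p₀))) atTop (𝓝 0) :=
      squeeze_zero_norm (fun n => by rw [Real.norm_eq_abs]; exact hCn n)
        (int_Dfun_tendsto hmart hbdd hcont)
    have h1 : Filter.Tendsto
        (fun n => ((a n - c * (a n + (1 - p₀))) + c * (1 - p₀)) * (1 - c)⁻¹) atTop
        (𝓝 ((0 + c * (1 - p₀)) * (1 - c)⁻¹)) :=
      (h0.add tendsto_const_nhds).mul tendsto_const_nhds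
    have heqfun : (fun n => ((a n - c * (a n + (1 - p₀))) + c * (1 - p₀)) * (1 - c)⁻¹)
        = a := by
      funext n
      have h1c : (1:ℝ) - c ≠ 0 := by linarith
      field_simp
      ring
    rw [heqfun] at h1
    have : (0 + c * (1 - p₀)) * (1 - c)⁻¹ = L := by
      rw [hL_def]; field_simp; ring
    rwa [this] at h1
  have hLnn : 0 ≤ L := by
    rw [hL_def]
    exact div_nonneg (mul_nonneg hc0 (by linarith)) (by linarith)
  constructor
  · -- upper bound for {inf ≤ x}
    set C : ℕ → Set Ω := fun M => ⋂ (n : ℕ) (_ : M ≤ n), (Bset p n c ∩ E) with hC_def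
    have hCmono : Monotone C := by
      intro M M' hMM'
      refine Set.iInter_mono fun n => ?_
      exact Set.iInter_mono' fun h => ⟨le_trans hMM' h, subset_rfl⟩
    have hsub : {ω | (⨅ t, p t ω) ≤ x} ∩ E ⊆ ⋃ M, C M := by
      rintro ω ⟨h1, h2⟩
      have hlt : (⨅ t, p t ω) < c := lt_of_le_of_lt h1 hxc
      obtain ⟨t₀, ht₀⟩ := exists_lt_of_ciInf_lt hlt
      have hopen : IsOpen {t : unitInterval | p t ω < c} :=
        isOpen_lt (hcont ω) continuous_const
      obtain ⟨r, hr, hball⟩ := Metric.isOpen_iff.mp hopen t₀ ht₀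
      obtain ⟨M, hM⟩ : ∃ M : ℕ, ((2:ℝ) ^ M)⁻¹ < r := by
        obtain ⟨M, hM⟩ := pow_unbounded_of_one_lt (R := ℝ) r⁻¹ one_lt_two
        exact ⟨M, by rwa [inv_lt_comm₀ (by positivity) hr]⟩
      refine Set.mem_iUnion.2 ⟨M, ?_⟩
      rw [hC_def]
      simp only [Set.mem_iInter]
      intro n hn
      obtain ⟨k, hk, hkd⟩ := tg_near t₀ n
      refine ⟨⟨k, hk, ?_⟩, h2⟩
      have : tg n k ∈ Metric.ball t₀ r := by
        rw [Metric.mem_ball]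
        calc dist (tg n k) t₀ ≤ ((2:ℝ)^n)⁻¹ := hkd
        _ ≤ ((2:ℝ)^M)⁻¹ := by gcongr <;> norm_num
        _ < r := hM
      exact le_of_lt (hball this)
    have hCle : ∀ M, μ (C M) ≤ ENNReal.ofReal L := by
      intro M
      have h1 : ∀ n, M ≤ n → (μ (C M)).toReal ≤ a n := by
        intro n hn
        refine ENNReal.toReal_mono (measure_ne_top μ _) (measure_mono ?_)
        exact Set.iInter_subset_of_subset n (Set.iInter_subset _ hn)
      have h2 : (μ (C M)).toReal ≤ L :=
        ge_of_tendsto hA (Filter.eventually_atTop.2 ⟨M, h1⟩)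
      calc μ (C M) = ENNReal.ofReal (μ (C M)).toReal :=
            (ENNReal.ofReal_toReal (measure_ne_top μ _)).symm
      _ ≤ ENNReal.ofReal L := ENNReal.ofReal_le_ofReal h2
    have hle : μ ({ω | (⨅ t, p t ω) ≤ x} ∩ E) ≤ ENNReal.ofReal L := by
      calc μ ({ω | (⨅ t, p t ω) ≤ x} ∩ E) ≤ μ (⋃ M, C M) := measure_mono hsub
      _ = ⨆ M, μ (C M) := hCmono.measure_iUnion
      _ ≤ ENNReal.ofReal L := iSup_le hCle
    calc (μ ({ω | (⨅ t, p t ω) ≤ x} ∩ E)).toReal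
        ≤ (ENNReal.ofReal L).toReal := ENNReal.toReal_mono (by simp) hle
    _ = L := ENNReal.toReal_ofReal hLnn
  · -- lower bound for {inf ≤ c}
    have hmono : ∀ n, a n ≤ (μ ({ω | (⨅ t, p t ω) ≤ c} ∩ E)).toReal := by
      intro n
      refine ENNReal.toReal_mono (measure_ne_top μ _) (measure_mono ?_)
      rintro ω ⟨⟨k, hk, hkc⟩, h2⟩
      refine ⟨?_, h2⟩
      have hbb : BddBelow (Set.range fun t => p t ω) :=
        ⟨0, by rintro y ⟨t, rfl⟩; exact (hbdd t ω).1⟩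
      exact le_trans (ciInf_le hbb (tg n k)) hkc
    exact le_of_tendsto hA (Filter.Eventually.of_forall hmono)


lemma key (hmart : Martingale p ℱ μ) (hcont : ∀ ω, Continuous fun t => p t ω)
    (hbdd : ∀ t ω, p t ω ∈ Set.Icc (0:ℝ) 1) (hp0 : ∀ ω, p 0 ω = p₀)
    (hp0mem : p₀ ∈ Set.Ioo (0:ℝ) 1)
    (hterm' : ∀ᵐ ω ∂μ, p 1 ω = 0 ∨ p 1 ω = 1)
    (hE : μ {ω | p 1 ω = 1} = ENNReal.ofReal p₀)
    {x : ℝ} (hx : 0 ≤ x) (hx1 : x < p₀) :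
    (μ ({ω | (⨅ t, p t ω) ≤ x} ∩ {ω | p 1 ω = 1})).toReal = x * (1 - p₀) / (1 - x) := by
  set E : Set Ω := {ω | p 1 ω = 1} with hE_def
  have hEmeas : MeasurableSet E := (pmeas hmart 1) (measurableSet_singleton 1)
  set cs : ℕ → ℝ := fun m => x + (p₀ - x) / (m + 2) with hcs_def
  have hcs_gt : ∀ m, x < cs m := fun m => by
    rw [hcs_def]
    have : (0:ℝ) < (p₀ - x) / (m + 2) := div_pos (by linarith) (by positivity)
    linarith
  have hcs_lt : ∀ m, cs m < p₀ := fun m => by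
    rw [hcs_def]
    have h1 : (p₀ - x) / ((m:ℝ) + 2) < p₀ - x :=
      div_lt_self (by linarith) (by linarith [Nat.cast_nonneg (α := ℝ) m])
    linarith
  have hcs_lim : Filter.Tendsto cs atTop (𝓝 x) := by
    have h1 : Filter.Tendsto (fun m : ℕ => ((m:ℝ) + 2)) atTop atTop :=
      Filter.tendsto_atTop_add_const_right _ 2 tendsto_natCast_atTop_atTop
    have h2 : Filter.Tendsto (fun m : ℕ => (p₀ - x) / ((m:ℝ) + 2)) atTop (𝓝 0) := by
      simpa [div_eq_mul_inv] using (h1.inv_tendsto_atTop).const_mul (p₀ - x)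
    simpa using (tendsto_const_nhds (x := x)).add h2
  have hLs_lim : Filter.Tendsto (fun m => cs m * (1 - p₀) / (1 - cs m)) atTop
      (𝓝 (x * (1 - p₀) / (1 - x))) := by
    have hx1' : (1:ℝ) - x ≠ 0 := by
      have : x < 1 := lt_trans hx1 hp0mem.2
      linarith
    exact ((hcs_lim.mul tendsto_const_nhds).div
      ((tendsto_const_nhds (x := (1:ℝ))).sub hcs_lim) hx1')
  have hbc := fun m => bound_c hmart hcont hbdd hp0 hp0mem hterm' hE hx (hcs_gt m) (hcs_lt m)
  apply le_antisymm
  · exact ge_of_tendsto hLs_lim (Filter.Eventually.of_forall fun m => (hbc m).1)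
  · -- continuity from above
    set F : ℕ → Set Ω := fun m => {ω | (⨅ t, p t ω) ≤ cs m} ∩ E with hF_def
    have hFmeas : ∀ m, MeasurableSet (F m) :=
      fun m => (measurableSet_le (inf_measurable hmart hcont hbdd) measurable_const).inter hEmeas
    have hFanti : Antitone F := by
      intro m m' hmm'
      refine Set.inter_subset_inter_left _ ?_
      intro ω hω
      simp only [Set.mem_setOf_eq] at hω ⊢
      refine le_trans hω ?_
      rw [hcs_def]
      simp only
      have hle : ((m:ℝ) + 2) ≤ ((m':ℝ) + 2) := by
        have : (m:ℝ) ≤ (m':ℝ) := Nat.cast_le.2 hmm'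
        linarith
      have h2 : (p₀ - x) / ((m':ℝ) + 2) ≤ (p₀ - x) / ((m:ℝ) + 2) :=
        div_le_div_of_nonneg_left (by linarith) (by positivity) hle
      linarith
    have hFint : ⋂ m, F m = {ω | (⨅ t, p t ω) ≤ x} ∩ E := by
      apply Set.Subset.antisymm
      · intro ω hω
        simp only [Set.mem_iInter] at hω
        refine ⟨?_, (hω 0).2⟩
        have h1 : ∀ m, (⨅ t, p t ω) ≤ cs m := fun m => (hω m).1
        exact ge_of_tendsto hcs_lim (Filter.Eventually.of_forall h1)
      · intro ω hω
        simp only [Set.mem_iInter]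
        exact fun m => ⟨le_trans hω.1 (hcs_gt m).le, hω.2⟩
    have hμF : Filter.Tendsto (fun m => μ (F m)) atTop
        (𝓝 (μ ({ω | (⨅ t, p t ω) ≤ x} ∩ E))) := by
      rw [← hFint]
      exact tendsto_measure_iInter_atTop (fun m => (hFmeas m).nullMeasurableSet) hFanti
        ⟨0, measure_ne_top μ _⟩
    have hμF' : Filter.Tendsto (fun m => (μ (F m)).toReal) atTop
        (𝓝 ((μ ({ω | (⨅ t, p t ω) ≤ x} ∩ E)).toReal)) :=
      (ENNReal.tendsto_toReal (measure_ne_top μ _)).comp hμF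
    exact le_of_tendsto_of_tendsto' hLs_lim hμF' fun m => (hbc m).2

end Main

end Stmt11Aux

theorem stmt_11 {Ω : Type*} {m0 : MeasurableSpace Ω} {μ : Measure Ω}
    [IsProbabilityMeasure μ]
    {ℱ : Filtration unitInterval m0} {p : unitInterval → Ω → ℝ} {Y : Ω → ℝ} {p₀ : ℝ}
    (hmart : Martingale p ℱ μ)
    (hcont : ∀ ω, Continuous fun t => p t ω)
    (hbdd : ∀ t ω, p t ω ∈ Set.Icc (0:ℝ) 1)
    (hp0 : ∀ ω, p 0 ω = p₀)
    (hp0mem : p₀ ∈ Set.Ioo (0:ℝ) 1)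
    (hY : ∀ᵐ ω ∂μ, Y ω = 0 ∨ Y ω = 1)
    (hterm : ∀ᵐ ω ∂μ, p 1 ω = Y ω)
    (hprior : (μ {ω | Y ω = 1}).toReal = p₀)
    {x : ℝ} (hx : 0 ≤ x) (hx1 : x < p₀) :
    (μ[|{ω | Y ω = 1}] {ω | (⨅ t, p t ω) ≤ x}).toReal
      = ((1 - p₀) / p₀) * (x / (1 - x)) := by
  classical
  set E : Set Ω := {ω | p 1 ω = 1} with hE_def
  set E' : Set Ω := {ω | Y ω = 1} with hE'_def
  set A : Set Ω := {ω | (⨅ t, p t ω) ≤ x} with hA_def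
  have hterm' : ∀ᵐ ω ∂μ, p 1 ω = 0 ∨ p 1 ω = 1 := by
    filter_upwards [hY, hterm] with ω h1 h2
    rw [h2]; exact h1
  have hEE' : (E : Set Ω) =ᵐ[μ] E' := by
    rw [Filter.eventuallyEq_set]
    filter_upwards [hterm] with ω h
    simp [hE_def, hE'_def, h]
  have hμE' : μ E' = ENNReal.ofReal p₀ := by
    rw [← hprior, ENNReal.ofReal_toReal (measure_ne_top μ E')]
  have hE : μ E = ENNReal.ofReal p₀ := by rw [measure_congr hEE', hμE']
  have hAmeas : MeasurableSet A :=
    measurableSet_le (Stmt11Aux.inf_measurable hmart hcont hbdd) measurable_const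
  have hkey := Stmt11Aux.key hmart hcont hbdd hp0 hp0mem hterm' hE hx hx1
  have hAE : μ (A ∩ E') = μ (A ∩ E) :=
    measure_congr (Filter.EventuallyEq.inter (Filter.EventuallyEq.refl _ _) hEE'.symm)
  have hcond : μ[|E'] A = (μ E')⁻¹ * μ (A ∩ E') := by
    rw [ProbabilityTheory.cond, Measure.smul_apply, smul_eq_mul,
      Measure.restrict_apply hAmeas]
  rw [hcond, ENNReal.toReal_mul, ENNReal.toReal_inv, hμE', hAE,
    ENNReal.toReal_ofReal hp0mem.1.le, hkey]
  have hx1' : (1:ℝ) - x ≠ 0 := by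
    have : x < 1 := lt_trans hx1 hp0mem.2
    linarith
  field_simp
end

section
/- In the symmetric n-player case where all prior win probabilities equal 1/n (n ≥ 2), the eventual winner's minimal win probability M_ω satisfies P(M_ω ≤ x) = (n−1)x/(1−x) for x ∈ [0, 1/n), and P(M_ω ≤ x) = 1 for x ≥ 1/n. In particular, for n = 3, P(M_ω ≤ 1/5) = 1/2. -/
open MeasureTheory ProbabilityTheory unitInterval

lemma inf_le_iff_exists_le {g : unitInterval → ℝ} (hg : Continuous g) (x : ℝ) :
    (⨅ t, g t) ≤ x ↔ ∃ t, g t ≤ x := by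
  obtain ⟨t₀, -, hmin'⟩ := isCompact_univ.exists_isMinOn ⟨0, trivial⟩ hg.continuousOn
  have hmin : ∀ s, g t₀ ≤ g s := fun s => hmin' (trivial : s ∈ Set.univ)
  constructor
  · intro h
    exact ⟨t₀, le_trans (le_ciInf fun t => hmin t) h⟩
  · rintro ⟨t, ht⟩
    exact le_trans (ciInf_le ⟨g t₀, by rintro y ⟨s, rfl⟩; exact hmin s⟩ t) ht

lemma hit_measurable {Ω : Type*} {m0 : MeasurableSpace Ω}
    {ℱ : Filtration unitInterval m0} {f : unitInterval → Ω → ℝ}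
    (hadp : ∀ s, StronglyMeasurable[ℱ s] (f s))
    (hcont : ∀ ω, Continuous fun t => f t ω) (x : ℝ) (t : unitInterval) :
    MeasurableSet[ℱ t] {ω | ∃ s ≤ t, f s ω ≤ x} := by
  obtain ⟨D, hDc, hDd⟩ := TopologicalSpace.exists_countable_dense unitInterval
  have hkey : {ω | ∃ s ≤ t, f s ω ≤ x}
      = ⋂ (m : ℕ), ⋃ (s ∈ insert t D) (_ : s ≤ t), {ω | f s ω < x + 1/(m+1)} := by
    ext ω
    simp only [Set.mem_setOf_eq, Set.mem_iInter, Set.mem_iUnion, Set.mem_setOf_eq]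
    constructor
    · rintro ⟨s₀, hs₀t, hs₀⟩ m
      have hε : (0:ℝ) < 1/(m+1) := by positivity
      set U : Set unitInterval := (fun u => f u ω) ⁻¹' Set.Iio (x + 1/(m+1)) with hU
      have hUo : IsOpen U := (hcont ω).isOpen_preimage _ isOpen_Iio
      have hs₀U : s₀ ∈ U := by
        simp only [hU, Set.mem_preimage, Set.mem_Iio]
        linarith
      by_cases ht : t ∈ U
      · exact ⟨t, Set.mem_insert _ _, le_refl t, ht⟩
      · have hs₀lt : s₀ < t := lt_of_le_of_ne hs₀t (fun h => ht (h ▸ hs₀U))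
        have hV : IsOpen (U ∩ Set.Iio t) := hUo.inter isOpen_Iio
        obtain ⟨d, hdD, hdV⟩ := hDd.exists_mem_open hV ⟨s₀, hs₀U, hs₀lt⟩
        exact ⟨d, Set.mem_insert_of_mem _ hdD, le_of_lt hdV.2, hdV.1⟩
    · intro h
      have hcpt : IsCompact (Set.Iic t) := (isClosed_Iic).isCompact
      obtain ⟨s₀, hs₀, hmin'⟩ := hcpt.exists_isMinOn ⟨t, le_refl t⟩ (hcont ω).continuousOn
      have hmin : ∀ s ∈ Set.Iic t, f s₀ ω ≤ f s ω := fun s hst => hmin' hst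
      refine ⟨s₀, hs₀, ?_⟩
      by_contra hgt
      push_neg at hgt
      obtain ⟨m, hm⟩ := exists_nat_one_div_lt (sub_pos.mpr hgt)
      obtain ⟨s, _, hst, hs⟩ := h m
      have := hmin s hst
      rw [one_div] at hm
      have : f s₀ ω < x + 1/(m+1) := lt_of_le_of_lt this hs
      rw [one_div] at this
      linarith [hm, this]
  rw [hkey]
  refine MeasurableSet.iInter fun m => ?_
  refine MeasurableSet.biUnion (hDc.insert t) fun s hs => ?_
  refine MeasurableSet.iUnion fun hst => ?_
  exact ℱ.mono hst _ ((hadp s).measurable measurableSet_Iio)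


noncomputable def hitGrid (N k : ℕ) : unitInterval :=
  ⟨min 1 ((k : ℝ) / (N + 1)), ⟨le_min zero_le_one (by positivity), min_le_left _ _⟩⟩

lemma hitGrid_mono (N : ℕ) : Monotone (hitGrid N) := by
  intro k l hkl
  simp only [hitGrid, Subtype.mk_le_mk]
  have hkl' : (k:ℝ) ≤ l := by exact_mod_cast hkl
  show min 1 ((k:ℝ)/(N+1)) ≤ min 1 ((l:ℝ)/(N+1)); gcongr

lemma hitGrid_top (N : ℕ) : hitGrid N (N + 1) = 1 := by
  have h : ((N + 1 : ℕ) : ℝ) / (N + 1) = 1 := by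
    rw [div_eq_one_iff_eq (by positivity)]; push_cast; ring
  simp only [hitGrid]
  exact Subtype.ext (by rw [Set.Icc.coe_one]; show min 1 _ = 1; rw [h]; simp)

open Classical in
noncomputable def hitStop {Ω : Type*} (f : unitInterval → Ω → ℝ) (x : ℝ) (N : ℕ) (ω : Ω) :
    unitInterval :=
  if h : ∃ k, ∃ s ≤ hitGrid N k, f s ω ≤ x then hitGrid N (Nat.find h) else 1

lemma key_prob {Ω : Type*} {m0 : MeasurableSpace Ω} {μ : Measure Ω}
    [IsProbabilityMeasure μ] {ℱ : Filtration unitInterval m0}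
    {f : unitInterval → Ω → ℝ} (hmart : Martingale f ℱ μ)
    (hcont : ∀ ω, Continuous fun t => f t ω)
    (hbdd : ∀ t ω, f t ω ∈ Set.Icc (0:ℝ) 1)
    {x c : ℝ} (hx0 : 0 ≤ x) (hxc : x < c) (hc1 : c ≤ 1)
    (hc : ∀ ω, f 0 ω = c)
    (hend : ∀ᵐ ω ∂μ, f 1 ω = 0 ∨ f 1 ω = 1) :
    (μ {ω | ∃ t, f t ω ≤ x}).toReal = (1 - c) / (1 - x) := by
  set A : Set Ω := {ω | ∃ t, f t ω ≤ x} with hA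
  set B : unitInterval → Set Ω := fun t => {ω | ∃ s ≤ t, f s ω ≤ x} with hBdef
  have hB : ∀ t, MeasurableSet[ℱ t] (B t) :=
    fun t => hit_measurable (fun s => hmart.stronglyAdapted s) hcont x t
  have hBmono : ∀ ⦃s t : unitInterval⦄, s ≤ t → B s ⊆ B t := by
    rintro s t hst ω ⟨u, hus, hu⟩; exact ⟨u, le_trans hus hst, hu⟩
  have hAB : A = B 1 := by
    ext ω; constructor
    · rintro ⟨t, ht⟩; exact ⟨t, le_one', ht⟩
    · rintro ⟨s, _, hs⟩; exact ⟨s, hs⟩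
  have hAmeas : MeasurableSet A := by rw [hAB]; exact ℱ.le 1 _ (hB 1)
  -- the dyadic stopping times
  have hexists_iff : ∀ N ω, (∃ k, ∃ s ≤ hitGrid N k, f s ω ≤ x) ↔ ω ∈ A := by
    intro N ω; constructor
    · rintro ⟨k, s, _, hs⟩; exact ⟨s, hs⟩
    · rintro ⟨t, ht⟩; exact ⟨N + 1, t, by rw [hitGrid_top]; exact le_one', ht⟩
  classical
  have hσ_mem : ∀ N ω (h : ∃ k, ∃ s ≤ hitGrid N k, f s ω ≤ x),
      hitStop f x N ω = hitGrid N (Nat.find h) := by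
    intro N ω h
    rw [hitStop, dif_pos h]
  have hσ_nmem : ∀ N ω, ω ∉ A → hitStop f x N ω = 1 := by
    intro N ω hω
    rw [hitStop, dif_neg (fun h => hω ((hexists_iff N ω).mp h))]
  -- stopping time property
  have hσ_st : ∀ N, IsStoppingTime ℱ (fun ω => (hitStop f x N ω : WithTop unitInterval)) := by
    intro N t
    simp only [WithTop.coe_le_coe]
    by_cases ht1 : t = 1
    · subst ht1
      have h : {ω | hitStop f x N ω ≤ 1} = Set.univ := by
        ext ω; simp [le_one']
      rw [h]; exact MeasurableSet.univ
    · have ht : t < 1 := lt_of_le_of_ne le_one' ht1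
      have hset : {ω | hitStop f x N ω ≤ t}
          = ⋃ (k : ℕ) (_ : hitGrid N k ≤ t), B (hitGrid N k) := by
        ext ω
        simp only [Set.mem_setOf_eq, Set.mem_iUnion]
        constructor
        · intro h
          by_cases hA' : ∃ k, ∃ s ≤ hitGrid N k, f s ω ≤ x
          · rw [hσ_mem N ω hA'] at h
            exact ⟨Nat.find hA', h, Nat.find_spec hA'⟩
          · rw [hitStop, dif_neg hA'] at h
            exact absurd h (not_le.mpr ht)
        · rintro ⟨k, hkt, hk⟩
          have hA' : ∃ k, ∃ s ≤ hitGrid N k, f s ω ≤ x := ⟨k, hk⟩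
          rw [hσ_mem N ω hA']
          exact le_trans (hitGrid_mono N (Nat.find_min' hA' hk)) hkt
      rw [hset]
      exact MeasurableSet.iUnion fun k => MeasurableSet.iUnion fun hkt =>
        ℱ.mono hkt _ (hB (hitGrid N k))
  have hσ_le : ∀ N (ω : Ω), hitStop f x N ω ≤ 1 := fun N ω => le_one'
  have hrange : ∀ N, (Set.range (hitStop f x N)).Countable := by
    intro N
    refine Set.Countable.mono ?_ ((Set.countable_range (hitGrid N)).insert 1)
    rintro v ⟨ω, rfl⟩
    by_cases hA' : ∃ k, ∃ s ≤ hitGrid N k, f s ω ≤ x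
    · rw [hσ_mem N ω hA']; exact Set.mem_insert_of_mem _ ⟨_, rfl⟩
    · rw [hitStop, dif_neg hA']; exact Set.mem_insert _ _
  -- optional sampling
  have hOS : ∀ N, stoppedValue f (fun ω => (hitStop f x N ω : WithTop unitInterval)) =ᵐ[μ] μ[f 1|(hσ_st N).measurableSpace] :=
    fun N => hmart.stoppedValue_ae_eq_condExp_of_le_const_of_countable_range (hσ_st N)
      (fun ω => WithTop.coe_le_coe.mpr (hσ_le N ω))
      (((hrange N).image ((↑) : unitInterval → WithTop unitInterval)).mono
        (by rintro _ ⟨ω, rfl⟩; exact ⟨_, ⟨ω, rfl⟩, rfl⟩))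
  have hint : ∀ N, ∫ ω, stoppedValue f (fun ω => (hitStop f x N ω : WithTop unitInterval)) ω ∂μ = c := by
    intro N
    rw [integral_congr_ae (hOS N),
      integral_condExp ((hσ_st N).measurableSpace_le_of_le (fun ω => WithTop.coe_le_coe.mpr (hσ_le N ω)))]
    have h01 : ∫ ω, f 1 ω ∂μ = ∫ ω, f 0 ω ∂μ := by
      rw [← integral_condExp (ℱ.le 0) (f := f 1)]
      exact integral_congr_ae (hmart.condExp_ae_eq nonneg')
    rw [h01]
    simp only [hc, integral_const, probReal_univ, measure_univ, ENNReal.toReal_one, smul_eq_mul, one_mul]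
  -- pointwise convergence
  set G : Ω → ℝ := fun ω => if ω ∈ A then x else f 1 ω with hG
  have htend : ∀ ω, Filter.Tendsto (fun N => stoppedValue f (fun ω => (hitStop f x N ω : WithTop unitInterval)) ω)
      Filter.atTop (nhds (G ω)) := by
    intro ω
    by_cases hωA : ω ∈ A
    · have hA' : ∀ N, ∃ k, ∃ s ≤ hitGrid N k, f s ω ≤ x :=
        fun N => (hexists_iff N ω).mpr hωA
      have hScl : IsClosed {s : unitInterval | f s ω ≤ x} :=
        IsClosed.preimage (hcont ω) isClosed_Iic
      obtain ⟨τ, hτS, hτlb⟩ := hScl.isCompact.exists_isLeast hωA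
      have hlow : ∀ N, τ ≤ hitStop f x N ω := by
        intro N
        rw [hσ_mem N ω (hA' N)]
        obtain ⟨s, hsk, hs⟩ := Nat.find_spec (hA' N)
        exact le_trans (hτlb hs) hsk
      have hup : ∀ N : ℕ, (hitStop f x N ω : ℝ) ≤ (τ : ℝ) + 1/(N+1) := by
        intro N
        have hNpos : (0:ℝ) < (N:ℝ) + 1 := by positivity
        set k := Nat.ceil ((τ:ℝ) * ((N:ℝ)+1)) with hk
        have hτk : (τ:ℝ) ≤ (k:ℝ)/((N:ℝ)+1) := by
          rw [le_div_iff₀ hNpos]; exact Nat.le_ceil _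
        have hτgk : τ ≤ hitGrid N k := by
          rw [← Subtype.coe_le_coe]
          exact le_min τ.2.2 hτk
        have hmem : ∃ s ≤ hitGrid N k, f s ω ≤ x := ⟨τ, hτgk, hτS⟩
        rw [hσ_mem N ω (hA' N)]
        have h1 : hitGrid N (Nat.find (hA' N)) ≤ hitGrid N k :=
          hitGrid_mono N (Nat.find_min' (hA' N) hmem)
        have h2 : (hitGrid N k : ℝ) ≤ (k:ℝ)/((N:ℝ)+1) := min_le_right _ _
        have h3 : (k:ℝ) < (τ:ℝ)*((N:ℝ)+1) + 1 :=
          Nat.ceil_lt_add_one (mul_nonneg τ.2.1 (by positivity))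
        have h4 : (k:ℝ)/((N:ℝ)+1) ≤ (τ:ℝ) + 1/((N:ℝ)+1) := by
          rw [div_le_iff₀ hNpos]
          have : ((τ:ℝ) + 1/((N:ℝ)+1)) * ((N:ℝ)+1) = (τ:ℝ)*((N:ℝ)+1) + 1 := by
            field_simp
          rw [this]
          linarith
        calc (hitGrid N (Nat.find (hA' N)) : ℝ) ≤ (hitGrid N k : ℝ) :=
              Subtype.coe_le_coe.mpr h1
          _ ≤ _ := le_trans h2 h4
      have hcoe : Filter.Tendsto (fun N : ℕ => (hitStop f x N ω : ℝ)) Filter.atTop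
          (nhds (τ:ℝ)) := by
        have hlim : Filter.Tendsto (fun N : ℕ => (τ:ℝ) + 1/((N:ℝ)+1)) Filter.atTop
            (nhds ((τ:ℝ) + 0)) :=
          tendsto_const_nhds.add tendsto_one_div_add_atTop_nhds_zero_nat
        rw [add_zero] at hlim
        exact tendsto_of_tendsto_of_tendsto_of_le_of_le tendsto_const_nhds hlim
          (fun N => Subtype.coe_le_coe.mpr (hlow N)) hup
      have hσtend : Filter.Tendsto (fun N => hitStop f x N ω) Filter.atTop (nhds τ) :=
        tendsto_subtype_rng.mpr hcoe
      have hfτ : f τ ω = x := by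
        refine le_antisymm hτS ?_
        by_contra hlt
        push_neg at hlt
        have hτ0 : (0:unitInterval) < τ := by
          rcases eq_or_lt_of_le (nonneg' : (0:unitInterval) ≤ τ) with h0 | h0
          · exfalso
            have h'' : f 0 ω ≤ x := by rw [h0]; exact hτS
            rw [hc ω] at h''
            exact absurd h'' (not_le.mpr hxc)
          · exact h0
        have hU : (fun s => f s ω) ⁻¹' Set.Iio x ∈ nhds τ :=
          (hcont ω).continuousAt.preimage_mem_nhds (Iio_mem_nhds hlt)
        obtain ⟨l, hlτ, hIoc⟩ := exists_Ioc_subset_of_mem_nhds hU ⟨0, hτ0⟩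
        obtain ⟨s, hls, hsτ⟩ := exists_between hlτ
        have hsS : s ∈ {s : unitInterval | f s ω ≤ x} := by
          show f s ω ≤ x
          exact le_of_lt (hIoc ⟨hls, le_of_lt hsτ⟩)
        exact absurd (hτlb hsS) (not_le.mpr hsτ)
      have hGx : G ω = x := if_pos hωA
      have hcomp := ((hcont ω).tendsto τ).comp hσtend
      rw [hfτ] at hcomp
      rw [hGx]
      exact hcomp
    · have hσ1 : ∀ N, hitStop f x N ω = 1 := fun N => hσ_nmem N ω hωA
      have hGf : G ω = f 1 ω := if_neg hωA
      rw [hGf]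
      have heq : (fun N => stoppedValue f (fun ω => (hitStop f x N ω : WithTop unitInterval)) ω) = fun _ => f 1 ω := by
        funext N
        simp [stoppedValue, hσ1 N]
      rw [heq]
      exact tendsto_const_nhds
  -- dominated convergence
  have hmeasF : ∀ N, AEStronglyMeasurable (stoppedValue f (fun ω => (hitStop f x N ω : WithTop unitInterval))) μ := fun N =>
    ((stronglyMeasurable_condExp.mono
      ((hσ_st N).measurableSpace_le_of_le (fun ω => WithTop.coe_le_coe.mpr (hσ_le N ω)))).aestronglyMeasurable).congr (hOS N).symm
  have hboundF : ∀ N, ∀ᵐ ω ∂μ, ‖stoppedValue f (fun ω => (hitStop f x N ω : WithTop unitInterval)) ω‖ ≤ (1:ℝ) := by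
    intro N
    refine Filter.Eventually.of_forall fun ω => ?_
    have hb := hbdd (hitStop f x N ω) ω
    have hsv : stoppedValue f (fun ω => (hitStop f x N ω : WithTop unitInterval)) ω = f (hitStop f x N ω) ω := rfl
    rw [hsv, Real.norm_eq_abs, abs_le]
    exact ⟨by linarith [hb.1], hb.2⟩
  have hDCT := tendsto_integral_of_dominated_convergence (F := fun N =>
      stoppedValue f (fun ω => (hitStop f x N ω : WithTop unitInterval))) (fun _ => (1:ℝ)) hmeasF
    (integrable_const 1) hboundF (Filter.Eventually.of_forall htend)
  simp only [hint] at hDCT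
  have hGint : c = ∫ ω, G ω ∂μ := tendsto_nhds_unique tendsto_const_nhds hDCT
  -- compute the integral of G
  have hf1_int : Integrable (f 1) μ := hmart.integrable 1
  have hGsplit : G = A.indicator (fun _ => x) + Aᶜ.indicator (f 1) := by
    funext ω
    by_cases hω : ω ∈ A <;> simp [hG, hω, Set.indicator_of_mem, Set.indicator_of_notMem]
  have hIA : ∫ ω, A.indicator (fun _ => x) ω ∂μ = x * (μ A).toReal := by
    rw [integral_indicator hAmeas, setIntegral_const, measureReal_def, smul_eq_mul, mul_comm]
  have hIAc : ∫ ω, Aᶜ.indicator (f 1) ω ∂μ = (μ Aᶜ).toReal := by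
    have h1 : ∀ᵐ ω ∂μ, Aᶜ.indicator (f 1) ω = Aᶜ.indicator (fun _ => (1:ℝ)) ω := by
      filter_upwards [hend] with ω hω
      by_cases hmem : ω ∈ Aᶜ
      · rw [Set.indicator_of_mem hmem, Set.indicator_of_mem hmem]
        rcases hω with h0 | h1
        · exact absurd (⟨1, by rw [h0]; exact hx0⟩ : ω ∈ A) hmem
        · exact h1
      · rw [Set.indicator_of_notMem hmem, Set.indicator_of_notMem hmem]
    rw [integral_congr_ae h1, integral_indicator hAmeas.compl, setIntegral_const, measureReal_def,
      smul_eq_mul, mul_one]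
  have hint_ind : Integrable (A.indicator fun _ => (x:ℝ)) μ :=
    (integrable_const x).indicator hAmeas
  have hint_ind2 : Integrable (Aᶜ.indicator (f 1)) μ := hf1_int.indicator hAmeas.compl
  have hIG : ∫ ω, G ω ∂μ = x * (μ A).toReal + (μ Aᶜ).toReal := by
    rw [hGsplit]
    simp only [Pi.add_apply]
    rw [integral_add hint_ind hint_ind2, hIA, hIAc]
  have hAc : (μ Aᶜ).toReal = 1 - (μ A).toReal := by
    rw [measure_compl hAmeas (measure_ne_top μ A), measure_univ,
      ENNReal.toReal_sub_of_le prob_le_one ENNReal.one_ne_top, ENNReal.toReal_one]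
  have hx1 : (0:ℝ) < 1 - x := by linarith
  rw [eq_div_iff (ne_of_gt hx1)]
  rw [hIG, hAc] at hGint
  linarith

theorem stmt_13 {Ω : Type*} {m0 : MeasurableSpace Ω} {μ : Measure Ω}
    [IsProbabilityMeasure μ]
    {ℱ : Filtration unitInterval m0} {n : ℕ} (hn : 2 ≤ n)
    {p : Fin n → unitInterval → Ω → ℝ} {Y : Fin n → Ω → ℝ}
    (hmart : ∀ i, Martingale (p i) ℱ μ)
    (hcont : ∀ i ω, Continuous fun t => p i t ω)
    (hbdd : ∀ i t ω, p i t ω ∈ Set.Icc (0:ℝ) 1)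
    (hsum : ∀ t ω, ∑ i, p i t ω = 1)
    (hp0 : ∀ i ω, p i 0 ω = 1 / (n : ℝ))
    (hY : ∀ᵐ ω ∂μ, ∀ i, Y i ω = 0 ∨ Y i ω = 1)
    (hwinner : ∀ᵐ ω ∂μ, ∃! i, Y i ω = 1)
    (hterm : ∀ᵐ ω ∂μ, ∀ i, p i 1 ω = Y i ω)
    (hprior : ∀ i, (μ {ω | Y i ω = 1}).toReal = 1 / (n : ℝ)) :
    (∀ x : ℝ, 0 ≤ x → x < 1 / (n : ℝ) →
      (μ {ω | (⨅ t, ∑ i, if Y i ω = 1 then p i t ω else 0) ≤ x}).toReal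
        = ((n : ℝ) - 1) * x / (1 - x)) ∧
    (∀ x : ℝ, 1 / (n : ℝ) ≤ x →
      (μ {ω | (⨅ t, ∑ i, if Y i ω = 1 then p i t ω else 0) ≤ x}).toReal = 1) ∧
    (n = 3 →
      (μ {ω | (⨅ t, ∑ i, if Y i ω = 1 then p i t ω else 0) ≤ (1/5 : ℝ)}).toReal = 1/2) := by
  classical
  have hn2 : (2:ℝ) ≤ (n:ℝ) := by exact_mod_cast hn
  have hnpos : (0:ℝ) < (n:ℝ) := by linarith
  have hn1 : 1/(n:ℝ) ≤ 1 := by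
    rw [div_le_one hnpos]; linarith
  have hGood : ∀ᵐ ω ∂μ, (∀ i, Y i ω = 0 ∨ Y i ω = 1) ∧ (∃! i, Y i ω = 1) ∧
      (∀ i, p i 1 ω = Y i ω) := hY.and (hwinner.and hterm)
  have hsum_eq : ∀ ω, (∀ i, p i 1 ω = Y i ω) → ∀ (i₀ : Fin n), Y i₀ ω = 1 →
      (∀ j, Y j ω = 1 → j = i₀) →
      (fun t => ∑ i, if Y i ω = 1 then p i t ω else 0) = fun t => p i₀ t ω := by
    intro ω h1Y i₀ hi₀ huniq
    funext t
    calc ∑ j, (if Y j ω = 1 then p j t ω else 0)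
        = ∑ j, (if j = i₀ then p j t ω else 0) :=
          Finset.sum_congr rfl (fun j _ => if_congr
            ⟨fun h => huniq j h, fun h => h ▸ hi₀⟩ rfl rfl)
      _ = p i₀ t ω := by simp
  have main : ∀ x : ℝ, 0 ≤ x → x < 1 / (n : ℝ) →
      (μ {ω | (⨅ t, ∑ i, if Y i ω = 1 then p i t ω else 0) ≤ x}).toReal
        = ((n : ℝ) - 1) * x / (1 - x) := by
    intro x hx0 hxn
    have hx1 : x < 1 := lt_of_lt_of_le hxn hn1
    set W : Fin n → Set Ω := fun i => {ω | p i 1 ω = 1} with hW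
    set Ai : Fin n → Set Ω := fun i => {ω | ∃ t, p i t ω ≤ x} with hAi
    have hWmeas : ∀ i, MeasurableSet (W i) := fun i =>
      ℱ.le 1 _ (((hmart i).stronglyAdapted 1).measurable (measurableSet_singleton (1:ℝ)))
    have hAimeas : ∀ i, MeasurableSet (Ai i) := by
      intro i
      have h1 : Ai i = {ω | ∃ s ≤ (1:unitInterval), p i s ω ≤ x} := by
        ext ω; constructor
        · rintro ⟨t, ht⟩; exact ⟨t, le_one', ht⟩
        · rintro ⟨s, _, hs⟩; exact ⟨s, hs⟩
      rw [h1]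
      exact ℱ.le 1 _ (hit_measurable (fun s => (hmart i).stronglyAdapted s) (hcont i) x 1)
    have hq : ∀ i, (μ (Ai i)).toReal = (1 - 1/(n:ℝ)) / (1 - x) := by
      intro i
      have hend_i : ∀ᵐ ω ∂μ, p i 1 ω = 0 ∨ p i 1 ω = 1 := by
        filter_upwards [hY, hterm] with ω h1 h2
        rw [h2 i]; exact h1 i
      exact key_prob (hmart i) (hcont i) (fun t ω => hbdd i t ω) hx0 hxn hn1
        (fun ω => hp0 i ω) hend_i
    have hEU : {ω | (⨅ t, ∑ i, if Y i ω = 1 then p i t ω else 0) ≤ x}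
        =ᵐ[μ] ⋃ i, W i ∩ Ai i := by
      rw [Filter.eventuallyEq_set]
      filter_upwards [hGood] with ω hg
      obtain ⟨h01, ⟨i₀, hi₀, huniq⟩, h1Y⟩ := hg
      simp only [Set.mem_setOf_eq, Set.mem_iUnion]
      rw [hsum_eq ω h1Y i₀ hi₀ huniq]
      constructor
      · intro hE
        have hex : ∃ t, p i₀ t ω ≤ x :=
          (inf_le_iff_exists_le (hcont i₀ ω) x).mp hE
        exact ⟨i₀, ⟨show p i₀ 1 ω = 1 by rw [h1Y i₀]; exact hi₀, hex⟩⟩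
      · rintro ⟨j, hjW, hjA⟩
        have hj : j = i₀ := huniq j (by show Y j ω = 1; rw [← h1Y j]; exact hjW)
        subst hj
        exact (inf_le_iff_exists_le (hcont j ω) x).mpr hjA
    rw [measure_congr hEU]
    have hdisj : Pairwise (Function.onFun (AEDisjoint μ) fun i => W i ∩ Ai i) := by
      intro i j hij
      apply measure_mono_null (t := {ω | ¬ ((∀ i, Y i ω = 0 ∨ Y i ω = 1) ∧
        (∃! i, Y i ω = 1) ∧ (∀ i, p i 1 ω = Y i ω))}) ?_ (ae_iff.mp hGood)
      rintro ω ⟨⟨hWi, -⟩, ⟨hWj, -⟩⟩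
      rintro ⟨h01, ⟨i₀, hi₀, huniq⟩, h1Y⟩
      have h1 : i = i₀ := huniq i (by show Y i ω = 1; rw [← h1Y i]; exact hWi)
      have h2 : j = i₀ := huniq j (by show Y j ω = 1; rw [← h1Y j]; exact hWj)
      exact hij (h1.trans h2.symm)
    rw [measure_iUnion₀ hdisj (fun i => ((hWmeas i).inter (hAimeas i)).nullMeasurableSet),
      tsum_fintype, ENNReal.toReal_sum (fun i _ => measure_ne_top μ _)]
    have hWA : ∀ i, (μ (W i ∩ Ai i)).toReal
        = 1/(n:ℝ) - (1 - (1 - 1/(n:ℝ))/(1-x)) := by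
      intro i
      have hsplit : μ (W i ∩ Ai i) + μ (W i \ Ai i) = μ (W i) :=
        measure_inter_add_diff (W i) (hAimeas i)
      have hdiff : μ (W i \ Ai i) = μ (Ai i)ᶜ := by
        apply measure_congr
        rw [Filter.eventuallyEq_set]
        filter_upwards [hGood] with ω hg
        obtain ⟨h01, hwin, h1Y⟩ := hg
        constructor
        · rintro ⟨-, hnA⟩; exact hnA
        · intro hnA
          refine ⟨?_, hnA⟩
          rcases h01 i with h0 | h1
          · exact absurd (⟨1, by rw [h1Y i, h0]; exact hx0⟩ : ω ∈ Ai i) hnA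
          · show p i 1 ω = 1
            rw [h1Y i]; exact h1
      have hWval : (μ (W i)).toReal = 1/(n:ℝ) := by
        rw [← hprior i]
        apply congrArg
        apply measure_congr
        rw [Filter.eventuallyEq_set]
        filter_upwards [hterm] with ω h1Y
        show p i 1 ω = 1 ↔ Y i ω = 1
        rw [h1Y i]
      have hAc : (μ (Ai i)ᶜ).toReal = 1 - (1 - 1/(n:ℝ))/(1-x) := by
        rw [measure_compl (hAimeas i) (measure_ne_top μ _), measure_univ,
          ENNReal.toReal_sub_of_le prob_le_one ENNReal.one_ne_top, ENNReal.toReal_one,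
          hq i]
      rw [hdiff] at hsplit
      have htR := congrArg ENNReal.toReal hsplit
      rw [ENNReal.toReal_add (measure_ne_top μ _) (measure_ne_top μ _), hWval, hAc] at htR
      linarith
    rw [Finset.sum_congr rfl (fun i _ => hWA i), Finset.sum_const, Finset.card_univ,
      Fintype.card_fin, nsmul_eq_mul]
    have hx1' : (1:ℝ) - x ≠ 0 := by linarith
    have hn0 : (n:ℝ) ≠ 0 := ne_of_gt hnpos
    field_simp
    ring
  refine ⟨main, ?_, ?_⟩
  · intro x hx
    have huniv : {ω | (⨅ t, ∑ i, if Y i ω = 1 then p i t ω else 0) ≤ x}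
        =ᵐ[μ] (Set.univ : Set Ω) := by
      rw [Filter.eventuallyEq_set]
      filter_upwards [hGood] with ω hg
      obtain ⟨h01, ⟨i₀, hi₀, huniq⟩, h1Y⟩ := hg
      simp only [Set.mem_univ, iff_true, Set.mem_setOf_eq]
      rw [hsum_eq ω h1Y i₀ hi₀ huniq]
      have hle : (⨅ t, p i₀ t ω) ≤ p i₀ 0 ω := by
        apply ciInf_le
        exact ⟨0, by rintro y ⟨s, rfl⟩; exact (hbdd i₀ s ω).1⟩
      rw [hp0 i₀ ω] at hle
      exact le_trans hle hx
    rw [measure_congr huniv, measure_univ, ENNReal.toReal_one]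
  · intro h3
    subst h3
    have h := main (1/5) (by norm_num) (by norm_num)
    rw [h]; norm_num
end
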